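/- arXiv:2210.11961 — 9 statements merged into one kernel-verified Lean document; each statement's English description precedes it below -/
import Mathlib

section
/- Let q ≥ 2 be an integer and let P be a finite set with |P| = q²+q+1. Suppose L₁, …, L_s are families of (q+1)-element subsets of P, each family having the property that every two distinct points of P lie in exactly one of its members, and suppose that for all i ≠ j, every member of L_i intersects every member of L_j in at most two points. Then s ≤ max{5, q+2}. -/
/-!
Fix two distinct points `x, y`. In each plane `i` let `Bᵢ` be the block through `x` and `y`.
Orthogovality forces `Bᵢ ∩ Bⱼ = {x, y}` for `i ≠ j`, so the sets `Bᵢ \ {x, y}` are pairwise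
disjoint `(q - 1)`-subsets of the `q² + q - 1` remaining points. Hence
`s (q - 1) ≤ q² + q - 1 = (q - 1)(q + 2) + 1`, i.e. `s ≤ q + 2`, except for `q = 2` where `s ≤ 5`.
-/

open Finset

theorem Finset.card_mul_le_card_biUnion {ι α : Type*} [DecidableEq α] {s : Finset ι}
    {f : ι → Finset α} {m : ℕ} (hs : (s : Set ι).PairwiseDisjoint f)
    (hf : ∀ i ∈ s, m ≤ #(f i)) : #s * m ≤ #(s.biUnion f) := by
  rw [card_biUnion hs, ← smul_eq_mul, ← sum_const]
  exact sum_le_sum hf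

theorem Finset.disjoint_sdiff_pair_of_card_inter_le_two {α : Type*} [DecidableEq α]
    {B₁ B₂ : Finset α} {x y : α} (hxy : x ≠ y) (hx₁ : x ∈ B₁) (hy₁ : y ∈ B₁) (hx₂ : x ∈ B₂)
    (hy₂ : y ∈ B₂) (h : #(B₁ ∩ B₂) ≤ 2) : Disjoint (B₁ \ {x, y}) (B₂ \ {x, y}) := by
  have hinter : {x, y} = B₁ ∩ B₂ :=
    eq_of_subset_of_card_le (by simp [insert_subset_iff, *]) (by rwa [card_pair hxy])
  rw [disjoint_left]
  intro z hz₁ hz₂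
  have hz : z ∈ B₁ ∩ B₂ := mem_inter.2 ⟨(mem_sdiff.1 hz₁).1, (mem_sdiff.1 hz₂).1⟩
  exact (mem_sdiff.1 hz₁).2 (hinter ▸ hz)

theorem le_max_five_add_two_of_mul_sub_one_le {q s : ℕ} (hq : 2 ≤ q)
    (h : s * (q - 1) ≤ q ^ 2 + q + 1 - 2) : s ≤ max 5 (q + 2) := by
  obtain ⟨r, rfl⟩ : ∃ r, q = r + 2 := ⟨q - 2, by omega⟩
  have h' : s * (r + 1) ≤ (r + 1) * (r + 4) + 1 := by
    rwa [show r + 2 - 1 = r + 1 by omega,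
      Nat.sub_eq_of_eq_add (c := (r + 1) * (r + 4) + 1) (by ring)] at h
  rcases Nat.eq_zero_or_pos r with rfl | hr
  · omega
  · have : s ≤ r + 4 := by nlinarith
    omega

/-- If `L₁, …, L_s` are mutually orthogoval projective planes of order `q ≥ 2`
on a common point set `P` with `|P| = q² + q + 1`, then `s ≤ max 5 (q+2)`. -/
theorem mutually_orthogoval_projective_planes_bound
    (q : ℕ) (hq : 2 ≤ q) (P : Type*) [Fintype P] [DecidableEq P]
    (hP : Fintype.card P = q ^ 2 + q + 1) (s : ℕ) (L : Fin s → Set (Finset P))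
    (hplane : ∀ i : Fin s,
      (∀ B ∈ L i, B.card = q + 1) ∧
      (∀ x y : P, x ≠ y → ∃! B : Finset P, B ∈ L i ∧ x ∈ B ∧ y ∈ B))
    (horth : ∀ i j : Fin s, i ≠ j →
      ∀ B₁ ∈ L i, ∀ B₂ ∈ L j, (B₁ ∩ B₂).card ≤ 2) :
    s ≤ max 5 (q + 2) := by
  obtain ⟨x, y, hxy⟩ := Fintype.exists_pair_of_one_lt_card (by rw [hP]; nlinarith)
  choose B hBL hxB hyB using fun i => ((hplane i).2 x y hxy).exists
  have hdisj : ((univ : Finset (Fin s)) : Set (Fin s)).PairwiseDisjoint (B · \ {x, y}) :=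
    fun i _ j _ hij => disjoint_sdiff_pair_of_card_inter_le_two hxy (hxB i) (hyB i) (hxB j)
      (hyB j) (horth i j hij _ (hBL i) _ (hBL j))
  have hcard : ∀ i ∈ univ, q - 1 ≤ #(B i \ {x, y}) := fun i _ => by
    rw [card_sdiff_of_subset (by simp [insert_subset_iff, hxB i, hyB i]), card_pair hxy,
      (hplane i).1 _ (hBL i)]
    omega
  have hsub : univ.biUnion (B · \ {x, y}) ⊆ univ \ {x, y} :=
    biUnion_subset.2 fun i _ => sdiff_subset_sdiff (subset_univ _) subset_rfl
  apply le_max_five_add_two_of_mul_sub_one_le hq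
  calc s * (q - 1) = #(univ : Finset (Fin s)) * (q - 1) := by simp
    _ ≤ #(univ.biUnion (B · \ {x, y})) := card_mul_le_card_biUnion hdisj hcard
    _ ≤ #(univ \ {x, y} : Finset P) := card_le_card hsub
    _ = q ^ 2 + q + 1 - 2 := by rw [card_univ_sdiff, card_pair hxy, hP]
end

section
/- For every prime power q there exists a pair of orthogoval Desarguesian projective planes of order q. Precisely: let F be a finite field with q elements and let P be the projectivization of the vector space F³ (the set of 1-dimensional subspaces of F³). Then there exists a bijection σ : P → P such that for any two 2-dimensional F-subspaces W₁ and W₂ of F³, the set {p ∈ P : p ⊆ W₁ and σ(p) ⊆ W₂} has at most two elements; that is, σ maps the point set of every projective line to an oval, so the images of the lines of PG(2,q) under σ form the line set of a second projective plane orthogoval to PG(2,q). -/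
/-!
Identify `F³` with the cubic extension `E` of `F` and write `φ x = x ^ q`. The permutation is
`[x] ↦ [x ^ (q + 1)] = [x * φ x]`; it is injective because `z ^ (q + 1) ∈ F` forces `φ² z = z`,
hence `z ∈ F`. The lines of `ℙ(E)` are the trace-orthogonals `{x | Tr (c * x) = 0}`, so the points
of a line `W` sent into the line of `c` are the projective zeros on `W` of the quadratic form
`Q_c x = Tr (c * x ^ (q + 1))`, and a binary quadratic form with three projective zeros vanishes.
It remains to see that `Q_c` vanishes on no plane `W`. Its polar form is `Tr (x * M y)` with
`M y = c * φ y + φ² c * φ² y`; if `Q_c` vanished on `W`, then `M` would map `W` into the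
one-dimensional trace-orthogonal of `W` and kill some `y ≠ 0` in `W`. But then `u = c * y ^ (q + 1)`
satisfies `φ u = -u`, so `0 = Q_c y = Tr u = u + φ u + φ² u = u`, which is absurd.
-/

open Module Projectivization Algebra
open scoped LinearAlgebra.Projectivization

namespace QuadraticMap

variable {K V : Type*} [Field K] [AddCommGroup V] [Module K V]

theorem apply_smul_add_smul (Q : QuadraticForm K V) (a b : K) (x y : V) :
    Q (a • x + b • y) = a * a * Q x + b * b * Q y + a * b * polar Q x y := by
  rw [QuadraticMap.map_add ⇑Q, QuadraticMap.map_smul, QuadraticMap.map_smul, polar_smul_left,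
    polar_smul_right, smul_eq_mul, smul_eq_mul, smul_eq_mul, smul_eq_mul]
  ring

theorem apply_eq_zero_of_mem_span_pair {Q : QuadraticForm K V} {x y z : V} (hx : Q x = 0)
    (hy : Q y = 0) {a b : K} (ha : a ≠ 0) (hb : b ≠ 0) (hab : Q (a • x + b • y) = 0)
    (hz : z ∈ Submodule.span K {x, y}) : Q z = 0 := by
  have hpolar : polar Q x y = 0 := by
    rw [apply_smul_add_smul, hx, hy] at hab
    simpa [ha, hb] using hab
  obtain ⟨s, t, rfl⟩ := Submodule.mem_span_pair.mp hz
  rw [apply_smul_add_smul, hx, hy, hpolar]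
  ring

theorem ncard_projective_zeros_le_two {Q : QuadraticForm K V} {W : Submodule K V}
    (hW : finrank K W = 2) (hQ : ∃ x ∈ W, Q x ≠ 0) {S : Set (ℙ K V)}
    (hS : ∀ p ∈ S, p.rep ∈ W ∧ Q p.rep = 0) : S.ncard ≤ 2 := by
  have : FiniteDimensional K W := .of_finrank_pos (by omega)
  by_contra! h
  obtain ⟨p₁, p₂, p₃, h₁, h₂, h₃, h₁₂, h₁₃, h₂₃⟩ :=
    (Set.two_lt_ncard_iff (Set.finite_of_ncard_pos (by omega))).mp h
  obtain ⟨hW₁, hQ₁⟩ := hS p₁ h₁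
  obtain ⟨hW₂, hQ₂⟩ := hS p₂ h₂
  obtain ⟨hW₃, hQ₃⟩ := hS p₃ h₃
  have hspan : Submodule.span K {p₁.rep, p₂.rep} = W := by
    refine Submodule.eq_of_le_of_finrank_le ?_ ?_
    · rw [Submodule.span_le]
      exact Set.insert_subset hW₁ (Set.singleton_subset_iff.mpr hW₂)
    · have := finrank_span_eq_card (linearIndependent_pair_iff_ne.mpr h₁₂)
      rw [Matrix.range_cons_cons_empty] at this
      rw [hW, this, Fintype.card_fin]
  obtain ⟨a, b, hab⟩ := Submodule.mem_span_pair.mp (hspan ▸ hW₃)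
  have smul_rep_ne {p p' : ℙ K V} (h : p ≠ p') (c : K) : c • p.rep ≠ p'.rep := fun hc =>
    h <| Eq.symm <| by rw [← mk_rep p, ← mk_rep p', mk_eq_mk_iff']; exact ⟨c, hc⟩
  have ha : a ≠ 0 := by rintro rfl; rw [zero_smul, zero_add] at hab; exact smul_rep_ne h₂₃ b hab
  have hb : b ≠ 0 := by rintro rfl; rw [zero_smul, add_zero] at hab; exact smul_rep_ne h₁₃ a hab
  obtain ⟨x, hx, hQx⟩ := hQ
  exact hQx (apply_eq_zero_of_mem_span_pair hQ₁ hQ₂ ha hb (hab ▸ hQ₃) (hspan ▸ hx))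

end QuadraticMap

namespace Projectivization

variable {K V V' : Type*} [Field K] [AddCommGroup V] [Module K V] [AddCommGroup V'] [Module K V']

def MapsLinesToArcs (σ : ℙ K V → ℙ K V) : Prop :=
  ∀ W₁ W₂ : Submodule K V, finrank K W₁ = 2 → finrank K W₂ = 2 →
    {p : ℙ K V | p.submodule ≤ W₁ ∧ (σ p).submodule ≤ W₂}.ncard ≤ 2

noncomputable def mapEquiv (e : V ≃ₗ[K] V') : ℙ K V ≃ ℙ K V' where
  toFun := map e.toLinearMap e.injective
  invFun := map e.symm.toLinearMap e.symm.injective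
  left_inv p := by induction p using ind; simp [map_mk]
  right_inv p := by induction p using ind; simp [map_mk]

theorem submodule_mapEquiv (e : V ≃ₗ[K] V') (p : ℙ K V) :
    (mapEquiv e p).submodule = p.submodule.map e.toLinearMap := by
  induction p using ind with
  | h v hv => simp [mapEquiv, map_mk, Submodule.map_span, Set.image_singleton]

theorem MapsLinesToArcs.comp_mapEquiv {σ : ℙ K V' → ℙ K V'} (hσ : MapsLinesToArcs σ)
    (e : V ≃ₗ[K] V') : MapsLinesToArcs ((mapEquiv e).symm ∘ σ ∘ mapEquiv e) := by
  intro W₁ W₂ h₁ h₂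
  have hle (p : ℙ K V) (W : Submodule K V) :
      (mapEquiv e p).submodule ≤ W.map e.toLinearMap ↔ p.submodule ≤ W := by
    rw [submodule_mapEquiv, Submodule.map_le_map_iff_of_injective e.injective]
  have hset : {p : ℙ K V | p.submodule ≤ W₁ ∧
        ((mapEquiv e).symm (σ (mapEquiv e p))).submodule ≤ W₂} =
      mapEquiv e ⁻¹' {p' | p'.submodule ≤ W₁.map e.toLinearMap ∧
        (σ p').submodule ≤ W₂.map e.toLinearMap} := by
    ext p
    simp only [Set.mem_ofPred_eq, Set.mem_preimage, ← hle, Equiv.apply_symm_apply]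
  simp only [Function.comp_apply, hset]
  rw [Set.ncard_preimage_of_injective_subset_range (mapEquiv e).injective (by simp)]
  exact hσ _ _ (by rwa [LinearEquiv.finrank_map_eq]) (by rwa [LinearEquiv.finrank_map_eq])

end Projectivization

namespace FiniteField

variable {F E : Type*} [Field F] [Fintype F] [Field E] [Finite E] [Algebra F E]

local notation "φ" => frobeniusAlgEquivOfAlgebraic F E

theorem frob_frob_frob (hE : finrank F E = 3) (x : E) : φ (φ (φ x)) = x := by
  have := pow_orderOf_eq_one (frobeniusAlgEquivOfAlgebraic F E)
  rw [orderOf_frobeniusAlgEquivOfAlgebraic, hE] at this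
  simpa [pow_succ] using DFunLike.congr_fun this x

theorem algebraMap_trace_eq_add_frob (hE : finrank F E = 3) (x : E) :
    algebraMap F E (trace F E x) = x + φ x + φ (φ x) := by
  simp [algebraMap_trace_eq_sum_pow, hE, Finset.sum_range_succ,
    ← pow_mul, Nat.card_eq_fintype_card, sq]

theorem mem_range_algebraMap_of_frob_eq {x : E} (hx : φ x = x) :
    x ∈ Set.range (algebraMap F E) := by
  rw [IsGalois.mem_range_algebraMap_iff_fixed]
  intro f
  obtain ⟨n, rfl⟩ := (bijective_frobeniusAlgEquivOfAlgebraic_pow F E).2 f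
  rw [AlgEquiv.coe_pow]
  exact Function.iterate_fixed hx n

theorem finrank_orthogonal_traceForm (hE : finrank F E = 3) {W : Submodule F E}
    (hW : finrank F W = 2) : finrank F ((traceForm F E).orthogonal W) = 1 := by
  rw [LinearMap.BilinForm.finrank_orthogonal (traceForm_nondegenerate F E), hE, hW]

variable (F) in
/-- `x ↦ Tr (c * x ^ (q + 1))` -/
noncomputable def frobTraceForm (c : E) : QuadraticForm F E :=
  LinearMap.BilinMap.toQuadraticMap
    ((traceForm F E).compl₁₂ (LinearMap.mulLeft F c ∘ₗ (φ).toLinearMap) LinearMap.id)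

theorem frobTraceForm_apply (c x : E) : frobTraceForm F c x = trace F E (c * φ x * x) := rfl

variable (F) in
noncomputable def frobTwist (c : E) : E →ₗ[F] E :=
  LinearMap.mulLeft F c ∘ₗ (φ).toLinearMap +
    LinearMap.mulLeft F (φ (φ c)) ∘ₗ (φ).toLinearMap ∘ₗ (φ).toLinearMap

theorem frobTwist_apply (c y : E) : frobTwist F c y = c * φ y + φ (φ c) * φ (φ y) := rfl

theorem polar_frobTraceForm (hE : finrank F E = 3) (c x y : E) :
    QuadraticMap.polar (frobTraceForm F c) x y = trace F E (x * frobTwist F c y) := by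
  have hfrob : trace F E (c * φ x * y) = trace F E (φ (φ c) * x * φ (φ y)) := by
    rw [← trace_eq_of_algEquiv φ (c * φ x * y), ← trace_eq_of_algEquiv φ]
    simp only [map_mul, frob_frob_frob hE]
  rw [frobTraceForm, LinearMap.BilinMap.polar_toQuadraticMap]
  simp only [LinearMap.compl₁₂_apply, traceForm_apply, LinearMap.comp_apply,
    LinearMap.mulLeft_apply, AlgEquiv.toLinearMap_apply, LinearMap.id_apply, hfrob, frobTwist_apply,
    ← map_add]
  ring_nf

theorem frob_eq_neg_of_frobTwist_eq_zero (hE : finrank F E = 3) {c y : E}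
    (h : frobTwist F c y = 0) : φ (c * φ y * y) = -(c * φ y * y) := by
  have h' := congrArg φ h
  simp only [frobTwist_apply, map_add, map_mul, frob_frob_frob hE, map_zero] at h'
  simp only [map_mul]
  linear_combination φ y * h'

theorem algebraMap_trace_eq_self_of_frob_eq_neg (hE : finrank F E = 3) {u : E} (h : φ u = -u) :
    algebraMap F E (trace F E u) = u := by
  rw [algebraMap_trace_eq_add_frob hE, h, map_neg, h]
  ring

theorem frobTraceForm_exists_ne_zero (hE : finrank F E = 3) {c : E} (hc : c ≠ 0)
    {W : Submodule F E} (hW : finrank F W = 2) : ∃ x ∈ W, frobTraceForm F c x ≠ 0 := by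
  by_contra! hQ
  have hM (y : E) (hy : y ∈ W) : frobTwist F c y ∈ (traceForm F E).orthogonal W := by
    intro x hx
    rw [traceForm_apply, ← polar_frobTraceForm hE]
    simp [QuadraticMap.polar, hQ x hx, hQ y hy, hQ _ (add_mem hx hy)]
  obtain ⟨y, hyW, hy0, hMy⟩ : ∃ y ∈ W, y ≠ 0 ∧ frobTwist F c y = 0 := by
    have : FiniteDimensional F W := .of_finrank_pos (by omega)
    obtain ⟨⟨y, hyW⟩, hy, hy0⟩ := Submodule.exists_mem_ne_zero_of_ne_bot
      (LinearMap.ker_ne_bot_of_finrank_lt (f := (frobTwist F c).restrict hM)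
        (by rw [finrank_orthogonal_traceForm hE hW, hW]; norm_num))
    exact ⟨y, hyW, by simpa using hy0, by simpa [Subtype.ext_iff] using hy⟩
  have hu := algebraMap_trace_eq_self_of_frob_eq_neg hE (frob_eq_neg_of_frobTwist_eq_zero hE hMy)
  rw [← frobTraceForm_apply, hQ y hyW, map_zero] at hu
  exact mul_ne_zero (mul_ne_zero hc (by simpa using hy0)) hy0 hu.symm

variable (F E) in
/-- `[x] ↦ [x ^ (q + 1)]` -/
noncomputable def projMulFrob : ℙ F E → ℙ F E :=
  Projectivization.lift (fun v => mk F (v.1 * φ v.1) (mul_ne_zero v.2 (by simpa using v.2))) <| by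
    rintro ⟨a, ha⟩ ⟨b, hb⟩ t rfl
    rw [mk_eq_mk_iff']
    exact ⟨t * t, by simp only [map_smul, smul_mul_smul_comm]⟩

theorem projMulFrob_mk (x : E) (hx : x ≠ 0) :
    projMulFrob F E (mk F x hx) = mk F (x * φ x) (mul_ne_zero hx (by simpa using hx)) := rfl

theorem projMulFrob_injective (hE : finrank F E = 3) : Function.Injective (projMulFrob F E) := by
  intro p p' h
  induction p using ind with | h x hx =>
  induction p' using ind with | h y hy =>
  rw [projMulFrob_mk, projMulFrob_mk, mk_eq_mk_iff'] at h
  obtain ⟨a, ha⟩ := h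
  obtain ⟨z, rfl⟩ : ∃ z, x = z * y := ⟨x / y, (div_mul_cancel₀ x hy).symm⟩
  have hz0 : φ z ≠ 0 := by simpa using left_ne_zero_of_mul hx
  have hz : z * φ z = algebraMap F E a := by
    have hφy : φ y ≠ 0 := by simpa using hy
    refine mul_right_cancel₀ (mul_ne_zero hy hφy) ?_
    rw [← Algebra.smul_def, ha, map_mul]
    ring
  have h2 : φ (φ z) = z := by
    have := congrArg φ hz
    rw [map_mul, AlgEquiv.commutes, ← hz] at this
    exact mul_left_cancel₀ hz0 (this.trans (mul_comm _ _))
  have h1 : φ z = z := by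
    have := frob_frob_frob hE z
    rwa [h2] at this
  obtain ⟨b, hb⟩ := mem_range_algebraMap_of_frob_eq h1
  rw [mk_eq_mk_iff']
  exact ⟨b, by rw [Algebra.smul_def, hb]⟩

theorem mapsLinesToArcs_projMulFrob (hE : finrank F E = 3) :
    MapsLinesToArcs (projMulFrob F E) := by
  intro W₁ W₂ h₁ h₂
  obtain ⟨c, hcW, hc⟩ : ∃ c ∈ (traceForm F E).orthogonal W₂, c ≠ 0 := by
    refine Submodule.exists_mem_ne_zero_of_ne_bot fun h => ?_
    have := finrank_orthogonal_traceForm hE h₂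
    rw [h, finrank_bot] at this
    exact zero_ne_one this
  refine QuadraticMap.ncard_projective_zeros_le_two h₁ (frobTraceForm_exists_ne_zero hE hc h₁) ?_
  rintro p ⟨hp₁, hp₂⟩
  rw [← mk_rep p, projMulFrob_mk, submodule_mk, Submodule.span_singleton_le_iff_mem] at hp₂
  rw [submodule_eq, Submodule.span_singleton_le_iff_mem] at hp₁
  refine ⟨hp₁, ?_⟩
  rw [frobTraceForm_apply, ← hcW _ hp₂, traceForm_apply]
  ring_nf

end FiniteField

/-- For every finite field `F` (with `q` elements) there is a bijection `σ` of the
point set of `PG(2,q)` (the projectivization of `F³`) such that the set of points `p` lying on a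
given projective line `W₁` whose image `σ p` lies on a given projective line `W₂` has at most two
elements; i.e. `σ` maps every line to an oval, giving a pair of orthogoval Desarguesian
projective planes of order `q`. -/
theorem exists_orthogoval_pair_of_projective_planes
    (F : Type*) [Field F] [Fintype F] :
    ∃ σ : Projectivization F (Fin 3 → F) ≃ Projectivization F (Fin 3 → F),
      ∀ W₁ W₂ : Submodule F (Fin 3 → F),
        Module.finrank F W₁ = 2 → Module.finrank F W₂ = 2 →
        {p : Projectivization F (Fin 3 → F) |
          p.submodule ≤ W₁ ∧ (σ p).submodule ≤ W₂}.ncard ≤ 2 := by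
  obtain ⟨p, _⟩ := CharP.exists F
  have : Fact p.Prime := ⟨CharP.char_is_prime F p⟩
  have hE := FiniteField.finrank_extension F p 3
  let e : (Fin 3 → F) ≃ₗ[F] FiniteField.Extension F p 3 :=
    LinearEquiv.ofFinrankEq _ _ (by rw [hE, finrank_fin_fun])
  let σ := Equiv.ofBijective _
    (Finite.injective_iff_bijective.mp (FiniteField.projMulFrob_injective hE))
  exact ⟨(mapEquiv e).trans (σ.trans (mapEquiv e).symm),
    (FiniteField.mapsLinesToArcs_projMulFrob hE).comp_mapEquiv e⟩
end

section
/- For D₁ = {0,1,3,9}, D₂ = {0,1,5,11}, D₃ = {0,1,4,6}, D₄ = {0,1,8,10}, viewed as subsets of Z/13Z, define L_i = { {d + x : d ∈ D_i} : x ∈ Z/13Z } for 1 ≤ i ≤ 4. Then each L_i is a family of 13 four-element subsets of Z/13Z in which every two distinct elements of Z/13Z lie in exactly one member (so each L_i is the line set of a projective plane of order 3 on Z/13Z), and for all i ≠ j, every member of L_i intersects every member of L_j in at most two points. Hence there exists a set of four mutually orthogoval projective planes of order 3. -/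
/-!
Each `Dᵢ` is a planar difference set in `ℤ/13ℤ`: every nonzero residue is a difference of two of
its elements in exactly one way. For such a set `D`, two distinct points `x, y` lie in the
translate `D + t` exactly when `x - t, y - t ∈ D`; existence of a representation of `x - y`
gives such a `t`, and its uniqueness forces two translates sharing two points to coincide. Hence
the translates form a projective plane. Orthogonality reduces, after translating by `-t`, to
`|Dᵢ ∩ (Dⱼ + s)| ≤ 2` for all `s`, a finite check.
-/

/-- The four base blocks (difference sets) `D₁ = {0,1,3,9}`, `D₂ = {0,1,5,11}`,
`D₃ = {0,1,4,6}`, `D₄ = {0,1,8,10}` in `ℤ/13ℤ`. -/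
def fourBaseBlocks : Fin 4 → Finset (ZMod 13) :=
  ![{0, 1, 3, 9}, {0, 1, 5, 11}, {0, 1, 4, 6}, {0, 1, 8, 10}]

/-- `fourPlanes i` is the family of all translates of the `i`-th base block. -/
def fourPlanes (i : Fin 4) : Set (Finset (ZMod 13)) :=
  {B | ∃ x : ZMod 13, B = (fourBaseBlocks i).image (· + x)}

open Finset

section DifferenceSet

variable {G : Type*} [AddGroup G] [DecidableEq G]

def translates (D : Finset G) : Set (Finset G) :=
  {B | ∃ x : G, B = D.image (· + x)}

/-- The two fields say that every nonzero `a` is a difference `d' - d` of elements of `D` in at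
least one, respectively at most one, way. -/
structure IsPlanarDifferenceSet (D : Finset G) : Prop where
  exists_add_mem : ∀ a ≠ 0, ∃ d ∈ D, a + d ∈ D
  card_inter_image_add_le_one : ∀ t ≠ 0, #(D ∩ D.image (· + t)) ≤ 1

theorem card_image_add_inter_image_add (D E : Finset G) (t s : G) :
    #(D.image (· + t) ∩ E.image (· + s)) = #(D ∩ E.image (· + (s - t))) := by
  have hinj : Function.Injective (· + t) := add_left_injective t
  rw [← card_image_of_injective (D ∩ E.image (· + (s - t))) hinj, image_inter _ _ hinj,
    image_image]
  congr 2
  ext e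
  simp [Function.comp_def, add_assoc]

theorem card_inter_le_of_mem_translates {D E B₁ B₂ : Finset G} {n : ℕ}
    (h : ∀ s, #(D ∩ E.image (· + s)) ≤ n) (hB₁ : B₁ ∈ translates D) (hB₂ : B₂ ∈ translates E) :
    #(B₁ ∩ B₂) ≤ n := by
  obtain ⟨t, rfl⟩ := hB₁
  obtain ⟨s, rfl⟩ := hB₂
  rw [card_image_add_inter_image_add]
  exact h (s - t)

theorem card_of_mem_translates {D B : Finset G} (hB : B ∈ translates D) : #B = #D := by
  obtain ⟨t, rfl⟩ := hB
  exact card_image_of_injective D (add_left_injective t)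

namespace IsPlanarDifferenceSet

variable {D : Finset G}

theorem eq_of_mem_image_add (hD : IsPlanarDifferenceSet D) {x y t s : G} (hxy : x ≠ y)
    (hxt : x ∈ D.image (· + t)) (hyt : y ∈ D.image (· + t))
    (hxs : x ∈ D.image (· + s)) (hys : y ∈ D.image (· + s)) : t = s := by
  by_contra hts
  have hshared : 1 < #(D.image (· + t) ∩ D.image (· + s)) :=
    one_lt_card.mpr ⟨x, mem_inter.mpr ⟨hxt, hxs⟩, y, mem_inter.mpr ⟨hyt, hys⟩, hxy⟩
  rw [card_image_add_inter_image_add] at hshared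
  have := hD.card_inter_image_add_le_one (s - t) (sub_ne_zero.mpr (Ne.symm hts))
  omega

theorem existsUnique_mem_translates (hD : IsPlanarDifferenceSet D) {x y : G} (hxy : x ≠ y) :
    ∃! B, B ∈ translates D ∧ x ∈ B ∧ y ∈ B := by
  obtain ⟨d, hd, hxd⟩ := hD.exists_add_mem (x - y) (sub_ne_zero.mpr hxy)
  have hx : x ∈ D.image (· + (-d + y)) := mem_image.mpr ⟨_, hxd, by simp [add_assoc]⟩
  have hy : y ∈ D.image (· + (-d + y)) := mem_image.mpr ⟨d, hd, by simp [← add_assoc]⟩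
  refine ⟨_, ⟨⟨_, rfl⟩, hx, hy⟩, ?_⟩
  rintro _ ⟨⟨t, rfl⟩, hxt, hyt⟩
  rw [hD.eq_of_mem_image_add hxy hxt hyt hx hy]

theorem injective_image_add (hD : IsPlanarDifferenceSet D) :
    Function.Injective fun t : G => D.image (· + t) := by
  intro t s hts
  simp only at hts
  by_contra hne
  obtain ⟨d, hd, had⟩ := hD.exists_add_mem (s - t) (sub_ne_zero.mpr (Ne.symm hne))
  have hx : d + t ∈ D.image (· + t) := mem_image_of_mem (· + t) hd
  have hy : s - t + d + t ∈ D.image (· + t) := mem_image_of_mem (· + t) had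
  refine hne (hD.eq_of_mem_image_add ?_ hx hy (hts ▸ hx) (hts ▸ hy))
  simpa [add_assoc, sub_eq_zero] using (sub_ne_zero.mpr (Ne.symm hne) : s - t ≠ 0)

theorem ncard_translates (hD : IsPlanarDifferenceSet D) : (translates D).ncard = Nat.card G := by
  have hrange : translates D = Set.range fun t : G => D.image (· + t) := by
    ext B
    simp [translates, eq_comm]
  rw [hrange, Set.ncard_range_of_injective hD.injective_image_add]

end IsPlanarDifferenceSet

end DifferenceSet

theorem fourPlanes_eq_translates (i : Fin 4) : fourPlanes i = translates (fourBaseBlocks i) :=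
  rfl

theorem card_fourBaseBlocks (i : Fin 4) : #(fourBaseBlocks i) = 4 := by
  revert i
  decide

theorem isPlanarDifferenceSet_fourBaseBlocks (i : Fin 4) :
    IsPlanarDifferenceSet (fourBaseBlocks i) := by
  constructor <;> revert i <;> decide

theorem card_fourBaseBlocks_inter_image_add_le_two {i j : Fin 4} (hij : i ≠ j) (s : ZMod 13) :
    #(fourBaseBlocks i ∩ (fourBaseBlocks j).image (· + s)) ≤ 2 := by
  revert i j s
  decide

/-- Each of the four translate families is the line set of a projective plane of
order 3 on `ℤ/13ℤ` (13 blocks of size 4, every pair of distinct points in exactly one block),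
and these four planes are mutually orthogoval (blocks from distinct planes meet in at most two
points). Hence there is a set of four mutually orthogoval projective planes of order 3. -/
theorem four_mutually_orthogoval_projective_planes_order_three :
    (∀ i : Fin 4, (fourPlanes i).ncard = 13) ∧
    (∀ i : Fin 4, ∀ B ∈ fourPlanes i, B.card = 4) ∧
    (∀ i : Fin 4, ∀ x y : ZMod 13, x ≠ y →
      ∃! B : Finset (ZMod 13), B ∈ fourPlanes i ∧ x ∈ B ∧ y ∈ B) ∧
    (∀ i j : Fin 4, i ≠ j →
      ∀ B₁ ∈ fourPlanes i, ∀ B₂ ∈ fourPlanes j, (B₁ ∩ B₂).card ≤ 2) := by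
  simp only [fourPlanes_eq_translates]
  refine ⟨fun i => ?_, fun i B hB => ?_, fun i x y hxy => ?_, fun i j hij B₁ hB₁ B₂ hB₂ => ?_⟩
  · rw [(isPlanarDifferenceSet_fourBaseBlocks i).ncard_translates, Nat.card_zmod]
  · rw [card_of_mem_translates hB, card_fourBaseBlocks]
  · exact (isPlanarDifferenceSet_fourBaseBlocks i).existsUnique_mem_translates hxy
  · exact card_inter_le_of_mem_translates (card_fourBaseBlocks_inter_image_add_le_two hij) hB₁ hB₂
end

section
/- There exists a set of seven mutually orthogoval affine planes of order 3, and seven is the maximum possible. That is: (a) there exist seven families L₁, …, L₇ of 3-element subsets of a 9-element set, each family having the property that every two distinct points lie in exactly one of its members, such that for all i ≠ j every member of L_i intersects every member of L_j in at most two points; and (b) no eight such families exist. -/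
/-!
Counting pairs, a Steiner triple system on `v` points has `v (v - 1) / 6` blocks, and two
orthogoval triple systems share no block, because distinct triples meet in at most two points.
So mutually orthogoval systems use disjoint sets of triples, and at most
`C(v, 3) / (v (v - 1) / 6) = v - 2` of them fit: seven for `v = 9`.

Seven are realised on `ℤ/7 ∪ {∞₁, ∞₂}` as the translates of a single system under
`x ↦ x + 1` (fixing `∞₁, ∞₂`), for a system that shares no triple with its nontrivial
translates.
-/

open Finset Function

section TripleSystems

variable {α β ι κ : Type*}

def IsSteinerTripleSystem (L : Set (Finset α)) : Prop :=
  (∀ B ∈ L, B.card = 3) ∧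
    ∀ x y : α, x ≠ y → ∃! B : Finset α, B ∈ L ∧ x ∈ B ∧ y ∈ B

theorem IsSteinerTripleSystem.image_equiv {L : Set (Finset α)}
    (hL : IsSteinerTripleSystem L) (e : α ≃ β) :
    IsSteinerTripleSystem (map e.toEmbedding '' L) := by
  refine ⟨?_, fun x y hxy => ?_⟩
  · rintro _ ⟨B, hB, rfl⟩
    rw [card_map, hL.1 B hB]
  · have hxy' : e.symm x ≠ e.symm y := e.symm.injective.ne hxy
    obtain ⟨B, ⟨hB, hxB, hyB⟩, huniq⟩ := hL.2 _ _ hxy'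
    refine ⟨B.map e.toEmbedding, ⟨⟨B, hB, rfl⟩, ?_, ?_⟩, ?_⟩
    · simpa [mem_map_equiv] using hxB
    · simpa [mem_map_equiv] using hyB
    · rintro _ ⟨⟨B', hB', rfl⟩, hxB', hyB'⟩
      rw [huniq B' ⟨hB', by simpa [mem_map_equiv] using hxB',
        by simpa [mem_map_equiv] using hyB'⟩]

variable [DecidableEq α] [DecidableEq β]

def Orthogoval (L M : Set (Finset α)) : Prop :=
  ∀ B₁ ∈ L, ∀ B₂ ∈ M, (B₁ ∩ B₂).card ≤ 2

def IsOrthogovalFamily (L : ι → Set (Finset α)) : Prop :=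
  (∀ i, IsSteinerTripleSystem (L i)) ∧ ∀ i j, i ≠ j → Orthogoval (L i) (L j)

theorem card_inter_le_two_of_ne {s t : Finset α} (hs : s.card = 3) (ht : t.card = 3)
    (hst : s ≠ t) : (s ∩ t).card ≤ 2 := by
  by_contra! h
  have hs' : s ∩ t = s := eq_of_subset_of_card_le inter_subset_left (by omega)
  have ht' : s ∩ t = t := eq_of_subset_of_card_le inter_subset_right (by omega)
  exact hst (hs'.symm.trans ht')

theorem orthogoval_iff_disjoint {L M : Set (Finset α)} (hL : ∀ B ∈ L, B.card = 3)
    (hM : ∀ B ∈ M, B.card = 3) : Orthogoval L M ↔ Disjoint L M := by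
  refine ⟨fun h => Set.disjoint_left.mpr fun B hBL hBM => ?_, fun h B₁ h₁ B₂ h₂ => ?_⟩
  · have := h B hBL B hBM
    rw [inter_self, hL B hBL] at this
    omega
  · exact card_inter_le_two_of_ne (hL B₁ h₁) (hM B₂ h₂) fun hB =>
      Set.disjoint_left.mp h h₁ (hB ▸ h₂)

theorem IsSteinerTripleSystem.of_card_inter_le_one {L : Set (Finset α)}
    (hcard : ∀ B ∈ L, B.card = 3)
    (hcover : ∀ x y : α, x ≠ y → ∃ B ∈ L, x ∈ B ∧ y ∈ B)
    (hinter : ∀ B₁ ∈ L, ∀ B₂ ∈ L, B₁ ≠ B₂ → (B₁ ∩ B₂).card ≤ 1) :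
    IsSteinerTripleSystem L := by
  refine ⟨hcard, fun x y hxy => ?_⟩
  obtain ⟨B, hB, hxB, hyB⟩ := hcover x y hxy
  refine ⟨B, ⟨hB, hxB, hyB⟩, fun B' ⟨hB', hxB', hyB'⟩ => ?_⟩
  by_contra hne
  have hpair : {x, y} ⊆ B' ∩ B := by
    simp only [insert_subset_iff, singleton_subset_iff, mem_inter]
    exact ⟨⟨hxB', hxB⟩, hyB', hyB⟩
  have := (card_le_card hpair).trans (hinter B' hB' B hB hne)
  rw [card_pair hxy] at this
  omega

theorem IsSteinerTripleSystem.ncard_mul_three [Fintype α] {L : Set (Finset α)}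
    (hL : IsSteinerTripleSystem L) : L.ncard * 3 = (Fintype.card α).choose 2 := by
  classical
  have hpairs : (univ : Finset α).powersetCard 2 = L.toFinset.biUnion (powersetCard 2) := by
    ext p
    simp only [mem_powersetCard, mem_biUnion, Set.mem_toFinset, subset_univ, true_and]
    refine ⟨fun hp => ?_, fun ⟨B, _, _, hp⟩ => hp⟩
    obtain ⟨x, y, hxy, rfl⟩ := card_eq_two.mp hp
    obtain ⟨B, ⟨hB, hxB, hyB⟩, -⟩ := hL.2 x y hxy
    exact ⟨B, hB, by simp [insert_subset_iff, hxB, hyB], hp⟩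
  have hdisj : (L.toFinset : Set (Finset α)).PairwiseDisjoint (powersetCard 2) := by
    intro B hB B' hB' hne
    refine disjoint_left.mpr fun p hp hp' => hne ?_
    rw [mem_powersetCard] at hp hp'
    obtain ⟨x, y, hxy, rfl⟩ := card_eq_two.mp hp.2
    simp only [insert_subset_iff, singleton_subset_iff] at hp hp'
    simp only [Set.coe_toFinset] at hB hB'
    exact (hL.2 x y hxy).unique ⟨hB, hp.1.1, hp.1.2⟩ ⟨hB', hp'.1.1, hp'.1.2⟩
  rw [← card_univ, ← card_powersetCard, hpairs, card_biUnion hdisj,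
    sum_const_nat fun B hB => ?_, Set.ncard_eq_toFinset_card']
  rw [card_powersetCard, hL.1 B (Set.mem_toFinset.mp hB)]
  rfl

theorem isOrthogovalFamily_iff_pairwise_disjoint {L : ι → Set (Finset α)} :
    IsOrthogovalFamily L ↔ (∀ i, IsSteinerTripleSystem (L i)) ∧ Pairwise (Disjoint on L) :=
  and_congr_right fun hL => forall₂_congr fun i j =>
    imp_congr_right fun _ => orthogoval_iff_disjoint (hL i).1 (hL j).1

theorem IsOrthogovalFamily.map_equiv {L : ι → Set (Finset α)} (hL : IsOrthogovalFamily L)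
    (e : α ≃ β) {f : κ → ι} (hf : f.Injective) :
    IsOrthogovalFamily fun k => map e.toEmbedding '' L (f k) := by
  obtain ⟨hsts, hdisj⟩ := isOrthogovalFamily_iff_pairwise_disjoint.mp hL
  refine isOrthogovalFamily_iff_pairwise_disjoint.mpr
    ⟨fun k => (hsts (f k)).image_equiv e, fun k k' hkk' => ?_⟩
  exact (Set.disjoint_image_iff (map_injective _)).mpr (hdisj (hf.ne hkk'))

theorem IsOrthogovalFamily.card_le [Fintype α] [Fintype ι] {L : ι → Set (Finset α)}
    (hL : IsOrthogovalFamily L) (hα : 2 ≤ Fintype.card α) :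
    Fintype.card ι ≤ Fintype.card α - 2 := by
  classical
  obtain ⟨hsts, hdisj⟩ := isOrthogovalFamily_iff_pairwise_disjoint.mp hL
  set v := Fintype.card α
  have htriples : univ.biUnion (fun i => (L i).toFinset) ⊆ univ.powersetCard 3 := by
    intro B hB
    obtain ⟨i, -, hB⟩ := mem_biUnion.mp hB
    exact mem_powersetCard.mpr ⟨subset_univ B, (hsts i).1 B (Set.mem_toFinset.mp hB)⟩
  have hdisj' : ((univ : Finset ι) : Set ι).PairwiseDisjoint fun i => (L i).toFinset :=
    fun i _ j _ hij => Set.disjoint_toFinset.mpr (hdisj hij)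
  have hcount : Fintype.card ι * v.choose 2 ≤ v.choose 2 * (v - 2) :=
    calc Fintype.card ι * v.choose 2 = ∑ i, (L i).toFinset.card * 3 := by
          simp only [v, ← Set.ncard_eq_toFinset_card', (hsts _).ncard_mul_three, sum_const,
            card_univ, smul_eq_mul]
      _ = (univ.biUnion fun i => (L i).toFinset).card * 3 := by rw [card_biUnion hdisj', sum_mul]
      _ ≤ v.choose 3 * 3 := by gcongr; simpa [v] using card_le_card htriples
      _ = v.choose 2 * (v - 2) := Nat.choose_succ_right_eq v 2
  exact Nat.le_of_mul_le_mul_right (by rwa [mul_comm (v.choose 2)] at hcount) (Nat.choose_pos hα)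

end TripleSystems

namespace CyclicLargeSet

abbrev Point := ZMod 7 ⊕ Fin 2

def shift (k : ZMod 7) : Point ≃ Point :=
  Equiv.sumCongr (Equiv.addRight k) (Equiv.refl _)

theorem shift_zero : shift 0 = Equiv.refl Point := by
  ext (x | x) <;> simp [shift]

theorem shift_trans (j k : ZMod 7) : (shift j).trans (shift k) = shift (j + k) := by
  ext (x | x) <;> simp [shift]

-- Found by computer search; `.inr 0` and `.inr 1` are `∞₁` and `∞₂`.
def baseSystem : Finset (Finset Point) :=
  {{.inl 0, .inl 1, .inl 2}, {.inl 0, .inl 3, .inr 0}, {.inl 0, .inl 4, .inl 6},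
   {.inl 0, .inl 5, .inr 1}, {.inl 1, .inl 3, .inl 6}, {.inl 1, .inl 4, .inl 5},
   {.inl 1, .inr 0, .inr 1}, {.inl 2, .inl 3, .inl 5}, {.inl 2, .inl 4, .inr 0},
   {.inl 2, .inl 6, .inr 1}, {.inl 3, .inl 4, .inr 1}, {.inl 5, .inl 6, .inr 0}}

set_option maxRecDepth 10000 in
theorem isSteinerTripleSystem_baseSystem :
    IsSteinerTripleSystem (baseSystem : Set (Finset Point)) :=
  .of_card_inter_le_one (by decide) (by decide) (by decide)

def plane (k : ZMod 7) : Set (Finset Point) :=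
  map (shift k).toEmbedding '' baseSystem

theorem plane_add (j k : ZMod 7) : plane (j + k) = map (shift k).toEmbedding '' plane j := by
  simp only [plane, Set.image_image, map_map, ← Equiv.trans_toEmbedding, shift_trans]

theorem disjoint_plane_zero {k : ZMod 7} (hk : k ≠ 0) : Disjoint (plane 0) (plane k) := by
  have h : ∀ k : ZMod 7, k ≠ 0 →
      Disjoint baseSystem (baseSystem.image (map (shift k).toEmbedding)) := by decide
  simpa [plane, shift_zero, ← coe_image] using h k hk

theorem pairwise_disjoint_plane : Pairwise (Disjoint on plane) := by
  intro j k hjk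
  have h := disjoint_plane_zero (sub_ne_zero.mpr hjk.symm)
  rwa [← Set.disjoint_image_iff (map_injective (shift j).toEmbedding), ← plane_add,
    ← plane_add, zero_add, sub_add_cancel] at h

theorem isOrthogovalFamily_plane : IsOrthogovalFamily plane :=
  isOrthogovalFamily_iff_pairwise_disjoint.mpr
    ⟨fun _ => isSteinerTripleSystem_baseSystem.image_equiv _, pairwise_disjoint_plane⟩

end CyclicLargeSet

open CyclicLargeSet in
/-- On a 9-element point set there exists a set of seven mutually orthogoval
affine planes of order 3 (seven families of 3-element blocks, each covering every pair of
distinct points exactly once, blocks from distinct families meeting in at most two points),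
and no such set of eight families exists. -/
theorem seven_mutually_orthogoval_affine_planes_order_three_max
    (P : Type*) [Fintype P] [DecidableEq P] (hP : Fintype.card P = 9) :
    (∃ L : Fin 7 → Set (Finset P),
      (∀ i : Fin 7,
        (∀ B ∈ L i, B.card = 3) ∧
        (∀ x y : P, x ≠ y → ∃! B : Finset P, B ∈ L i ∧ x ∈ B ∧ y ∈ B)) ∧
      (∀ i j : Fin 7, i ≠ j →
        ∀ B₁ ∈ L i, ∀ B₂ ∈ L j, (B₁ ∩ B₂).card ≤ 2)) ∧
    ¬ ∃ L : Fin 8 → Set (Finset P),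
      (∀ i : Fin 8,
        (∀ B ∈ L i, B.card = 3) ∧
        (∀ x y : P, x ≠ y → ∃! B : Finset P, B ∈ L i ∧ x ∈ B ∧ y ∈ B)) ∧
      (∀ i j : Fin 8, i ≠ j →
        ∀ B₁ ∈ L i, ∀ B₂ ∈ L j, (B₁ ∩ B₂).card ≤ 2) := by
  refine ⟨?_, fun ⟨L, hL⟩ => ?_⟩
  · have e : Point ≃ P := Fintype.equivOfCardEq (by simp [hP])
    exact ⟨_, isOrthogovalFamily_plane.map_equiv e (ZMod.finEquiv 7).injective⟩
  · have h := IsOrthogovalFamily.card_le (L := L) hL (by omega)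
    rw [Fintype.card_fin, hP] at h
    omega
end

section
/- Let q = 2ⁿ with n ≥ 1, let F be the finite field with q elements, and let b, c ∈ F be such that X³ + bX + c is irreducible over F. Define quadratic forms φ(x,y,z) = x² + yz and χ(x,y,z) = y² + byz + cxz on F³. Then for every (α, β) ∈ F² with (α, β) ≠ (0,0), the set C_{α,β} of points (x:y:z) of the projectivization of F³ satisfying α·φ(x,y,z) + β·χ(x,y,z) = 0 is an oval (it has exactly q+1 points and no three of them are collinear); moreover for (α:β) ≠ (α':β') the intersection C_{α,β} ∩ C_{α',β'} is exactly the single point (0:0:1). In other words, the pencil generated by φ and χ is a trivially intersecting pencil of non-singular conic ovals. -/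
/-!
In characteristic `2`, `αφ + βχ = αx² + βy² + z·L(x, y)` with `L = βc·x + (α + βb)·y`, and
`αx² + βy²` is the square of a linear form because every element of `F` is a square.
Irreducibility of `X³ + bX + c` says exactly that this linear form and `L` have no common
nontrivial zero. Hence every line through `(0:0:1)` meets the conic in exactly one further point
(the tangent `L = 0` in `(0:0:1)` itself), which identifies the conic with `PG(1,q)`. The polar
form of `αφ + βχ` vanishes on no two distinct points of the conic, so no line meets it three
times. Two members of the pencil meet where `φ = χ = 0`, and eliminating `y` leaves
`x·(x³ + bxz² + cz³) = 0`, whence `x = y = 0`.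
-/

open Polynomial

/-- The point `(x : y : 1)` of `PG(2,q)`; in particular `affinePoint 0 0 = (0:0:1)`. -/
noncomputable def affinePoint {F : Type*} [Field F] (x y : F) :
    Projectivization F (Fin 3 → F) :=
  Projectivization.mk F ![x, y, 1] (by
    intro hc
    have h2 : (![x, y, (1 : F)]) 2 = 0 := congrFun hc 2
    simp at h2)

open scoped LinearAlgebra.Projectivization

namespace Projectivization

variable {K V : Type*} [Field K] [AddCommGroup V] [Module K V]

theorem rep_mem_of_submodule_le {p : ℙ K V} {W : Submodule K V} (h : p.submodule ≤ W) :
    p.rep ∈ W := by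
  rwa [submodule_eq, Submodule.span_singleton_le_iff_mem] at h

theorem exists_smul_add_smul_eq_rep {p₁ p₂ p₃ : ℙ K V} (h₁₂ : p₁ ≠ p₂) (h₁₃ : p₁ ≠ p₃)
    (h₂₃ : p₂ ≠ p₃) {W : Submodule K V} (hW : Module.finrank K W = 2) (h₁ : p₁.submodule ≤ W)
    (h₂ : p₂.submodule ≤ W) (h₃ : p₃.submodule ≤ W) :
    ∃ a e : K, a ≠ 0 ∧ e ≠ 0 ∧ a • p₁.rep + e • p₂.rep = p₃.rep := by
  have hind : LinearIndependent K ![p₁.rep, p₂.rep] := by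
    rwa [← independent_mk_iff_LinearIndependent p₁.rep_nonzero p₂.rep_nonzero, mk_rep, mk_rep,
      independent_pair_iff_ne]
  have hspan := line_unique' p₁.rep_nonzero p₂.rep_nonzero hind W hW
    (rep_mem_of_submodule_le h₁) (rep_mem_of_submodule_le h₂)
  obtain ⟨a, e, hae⟩ := Submodule.mem_span_pair.mp (hspan ▸ rep_mem_of_submodule_le h₃)
  have proportional : ∀ {p q : ℙ K V} (t : K), t • p.rep = q.rep → p = q := fun {p q} t h => by
    rw [← mk_rep p, ← mk_rep q, eq_comm, mk_eq_mk_iff']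
    exact ⟨t, h⟩
  refine ⟨a, e, fun ha => h₂₃ ?_, fun he => h₁₃ ?_, hae⟩
  · exact proportional e (by simpa [ha] using hae)
  · exact proportional a (by simpa [he] using hae)

theorem mk_eq_mk_of_det_eq_zero {v w : Fin 2 → K} (hv : v ≠ 0) (hw : w ≠ 0)
    (h : v 0 * w 1 - v 1 * w 0 = 0) : mk K v hv = mk K w hw := by
  by_contra hne
  rw [← Ne, ← independent_pair_iff_ne, independent_mk_iff_LinearIndependent,
    LinearIndependent.pair_iff] at hne
  have h₁ := hne (w 1) (-v 1) (by ext i; fin_cases i <;> simp <;> [linear_combination h; ring])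
  have h₀ := hne (w 0) (-v 0) (by ext i; fin_cases i <;> simp <;> [ring; linear_combination -h])
  exact hv (by ext i; fin_cases i <;> simp_all)

end Projectivization

theorem charP_two_of_card_eq_two_pow {F : Type*} [Field F] [Fintype F] {n : ℕ}
    (hF : Fintype.card F = 2 ^ n) : CharP F 2 := by
  refine CharTwo.of_one_ne_zero_of_two_eq_zero one_ne_zero ?_
  have h := FiniteField.cast_card_eq_zero F
  rw [hF, Nat.cast_pow, Nat.cast_ofNat] at h
  exact (pow_eq_zero_iff'.mp h).1

open Projectivization

theorem cubic_ne_zero_of_irreducible {F : Type*} [Field F] {b c : F}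
    (hirr : Irreducible (X ^ 3 + C b * X + C c : F[X])) (t : F) : t ^ 3 + b * t + c ≠ 0 := by
  intro ht
  have hdeg := degree_eq_one_of_irreducible_of_root hirr (x := t) (by simp [ht])
  rw [show (X ^ 3 + C b * X + C c : F[X]).degree = 3 by compute_degree!] at hdeg
  exact absurd hdeg (by decide)

section Pencil

variable {F : Type*} [Field F] (b c α β : F)

/-- The line `tangentForm b c α β x y = 0` is the tangent to the conic at `(0:0:1)`. -/
def tangentForm (x y : F) : F := β * c * x + (α + β * b) * y

def pencilForm (v : Fin 3 → F) : F :=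
  α * (v 0 ^ 2 + v 1 * v 2) + β * (v 1 ^ 2 + b * v 1 * v 2 + c * v 0 * v 2)

def pencilConic : Set (ℙ F (Fin 3 → F)) := {p | pencilForm b c α β p.rep = 0}

/-- In characteristic `2` this is the polar form of `pencilForm`. -/
def pencilPolar (u w : Fin 3 → F) : F :=
  u 2 * tangentForm b c α β (w 0) (w 1) + w 2 * tangentForm b c α β (u 0) (u 1)

/-- The second intersection of the conic with the line through `(0:0:1)` and `(x:y:0)`. -/
def pencilParam (s : Fin 2 → F) : Fin 3 → F :=
  ![tangentForm b c α β (s 0) (s 1) * s 0, tangentForm b c α β (s 0) (s 1) * s 1,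
    -(α * s 0 ^ 2 + β * s 1 ^ 2)]

theorem pencilForm_eq_add_mul_tangentForm (v : Fin 3 → F) :
    pencilForm b c α β v = α * v 0 ^ 2 + β * v 1 ^ 2 + v 2 * tangentForm b c α β (v 0) (v 1) := by
  unfold pencilForm tangentForm; ring

theorem pencilForm_eq_mul_add_mul (v : Fin 3 → F) :
    pencilForm b c α β v = α * pencilForm b c 1 0 v + β * pencilForm b c 0 1 v := by
  unfold pencilForm; ring

theorem pencilForm_smul (t : F) (v : Fin 3 → F) :
    pencilForm b c α β (t • v) = t ^ 2 * pencilForm b c α β v := by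
  simp only [pencilForm, Pi.smul_apply, smul_eq_mul]; ring

theorem pencilForm_smul_add_smul [CharP F 2] (a e : F) (u w : Fin 3 → F) :
    pencilForm b c α β (a • u + e • w) =
      a ^ 2 * pencilForm b c α β u + e ^ 2 * pencilForm b c α β w +
        a * e * pencilPolar b c α β u w := by
  simp only [pencilForm, pencilPolar, tangentForm, Pi.add_apply, Pi.smul_apply, smul_eq_mul]
  linear_combination a * e * (α * u 0 * w 0 + β * u 1 * w 1) * CharTwo.two_eq_zero (R := F)

theorem pencilForm_pencilParam (s : Fin 2 → F) :
    pencilForm b c α β (pencilParam b c α β s) = 0 := by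
  simp only [pencilForm_eq_add_mul_tangentForm, pencilParam, tangentForm, Matrix.cons_val]; ring

theorem pencilParam_smul (t : F) (s : Fin 2 → F) :
    pencilParam b c α β (t • s) = t ^ 2 • pencilParam b c α β s := by
  ext i; fin_cases i <;> simp [pencilParam, tangentForm] <;> ring

theorem mk_mem_pencilConic {v : Fin 3 → F} (hv : v ≠ 0) :
    mk F v hv ∈ pencilConic b c α β ↔ pencilForm b c α β v = 0 := by
  obtain ⟨a, ha⟩ := exists_smul_eq_mk_rep F v hv
  simp [pencilConic, ← ha, Units.smul_def, pencilForm_smul]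

def pencilParamProj (h : ∀ s, s ≠ 0 → pencilParam b c α β s ≠ 0) :
    ℙ F (Fin 2 → F) → ℙ F (Fin 3 → F) :=
  Projectivization.lift (fun s => mk F (pencilParam b c α β s) (h s s.2)) fun s s' t hst => by
    simp only [hst, mk_eq_mk_iff', pencilParam_smul]
    exact ⟨t ^ 2, rfl⟩

end Pencil

section Parametrization

variable {F : Type*} [Field F] {b c α β : F}

theorem tangentDirection_ne_zero (hroot : ∀ t : F, t ^ 3 + b * t + c ≠ 0)
    (hαβ : (α, β) ≠ (0, 0)) :
    ![α + β * b, -(β * c)] ≠ 0 := by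
  intro h
  have h0 := congrFun h 0
  have h1 := congrFun h 1
  have hc : c ≠ 0 := by simpa using hroot 0
  simp only [Matrix.cons_val_zero, Matrix.cons_val_one, Pi.zero_apply, neg_eq_zero,
    mul_eq_zero, hc, or_false] at h0 h1
  subst h1
  exact hαβ (by simpa using h0)

theorem det_eq_zero_of_tangentForm_eq_zero (hroot : ∀ t : F, t ^ 3 + b * t + c ≠ 0)
    (hαβ : (α, β) ≠ (0, 0)) {v w : Fin 2 → F}
    (hv : tangentForm b c α β (v 0) (v 1) = 0) (hw : tangentForm b c α β (w 0) (w 1) = 0) :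
    v 0 * w 1 - v 1 * w 0 = 0 := by
  unfold tangentForm at hv hw
  by_contra hdet
  apply tangentDirection_ne_zero hroot hαβ
  have h0 : (α + β * b) * (v 0 * w 1 - v 1 * w 0) = 0 := by linear_combination v 0 * hw - w 0 * hv
  have h1 : β * c * (v 0 * w 1 - v 1 * w 0) = 0 := by linear_combination w 1 * hv - v 1 * hw
  ext i; fin_cases i <;> simp_all

theorem pencilParamProj_injective (hroot : ∀ t : F, t ^ 3 + b * t + c ≠ 0)
    (hαβ : (α, β) ≠ (0, 0)) (h : ∀ s, s ≠ 0 → pencilParam b c α β s ≠ 0) :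
    Function.Injective (pencilParamProj b c α β h) := by
  intro p q hpq
  induction p using Projectivization.ind with | h v hv =>
  induction q using Projectivization.ind with | h w hw =>
  obtain ⟨a, ha⟩ := (mk_eq_mk_iff F _ _ _ _).mp hpq
  have e0 := congrFun ha 0
  have e1 := congrFun ha 1
  simp only [pencilParam, Units.smul_def, Pi.smul_apply, smul_eq_mul, Matrix.cons_val] at e0 e1
  refine mk_eq_mk_of_det_eq_zero hv hw ?_
  rcases eq_or_ne (tangentForm b c α β (v 0) (v 1)) 0 with hLv | hLv
  · rcases eq_or_ne (tangentForm b c α β (w 0) (w 1)) 0 with hLw | hLw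
    · exact det_eq_zero_of_tangentForm_eq_zero hroot hαβ hLv hLw
    · have h' : (a : F) * tangentForm b c α β (w 0) (w 1) * (v 0 * w 1 - v 1 * w 0) = 0 := by
        linear_combination v 0 * e1 - v 1 * e0
      simpa [hLw] using h'
  · have h' : tangentForm b c α β (v 0) (v 1) * (v 0 * w 1 - v 1 * w 0) = 0 := by
      linear_combination -(w 1) * e0 + w 0 * e1
    simpa [hLv] using h'

theorem range_pencilParamProj (hroot : ∀ t : F, t ^ 3 + b * t + c ≠ 0)
    (hαβ : (α, β) ≠ (0, 0)) (h : ∀ s, s ≠ 0 → pencilParam b c α β s ≠ 0) :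
    Set.range (pencilParamProj b c α β h) = pencilConic b c α β := by
  ext p
  induction p using Projectivization.ind with | h v hv =>
  refine ⟨?_, fun hp => ?_⟩
  · rintro ⟨s, hs⟩
    induction s using Projectivization.ind with | h s hs' =>
    rw [← hs]
    exact (mk_mem_pencilConic b c α β _).mpr (pencilForm_pencilParam b c α β s)
  rw [mk_mem_pencilConic, pencilForm_eq_add_mul_tangentForm] at hp
  by_cases hv01 : v 0 = 0 ∧ v 1 = 0
  · refine ⟨mk F _ (tangentDirection_ne_zero hroot hαβ), ?_⟩
    have hL : tangentForm b c α β (α + β * b) (-(β * c)) = 0 := by unfold tangentForm; ring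
    show mk F _ _ = _
    rw [mk_eq_mk_iff_crossProduct_eq_zero]
    ext i; fin_cases i <;> simp [cross_apply, pencilParam, hL, hv01]
  · refine ⟨mk F ![v 0, v 1] (fun h0 => hv01 ⟨congrFun h0 0, congrFun h0 1⟩), ?_⟩
    show mk F _ _ = _
    rw [mk_eq_mk_iff_crossProduct_eq_zero]
    ext i; fin_cases i <;> simp [cross_apply, pencilParam] <;>
      [linear_combination v 1 * hp; linear_combination -(v 0) * hp; ring]

end Parametrization

section CharTwo

variable {F : Type*} [Field F] [CharP F 2] {b c α β : F}

/-- The point at infinity of the conic does not lie on its tangent at `(0:0:1)`. -/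
theorem eq_zero_of_tangentForm_eq_zero [Fintype F] (hroot : ∀ t : F, t ^ 3 + b * t + c ≠ 0)
    (hαβ : (α, β) ≠ (0, 0)) {x y : F} (hM : α * x ^ 2 + β * y ^ 2 = 0)
    (hL : tangentForm b c α β x y = 0) : x = 0 ∧ y = 0 := by
  rcases eq_or_ne β 0 with rfl | hβ
  · have hα : α ≠ 0 := by rintro rfl; exact hαβ rfl
    have hx : x = 0 := by simpa [hα] using hM
    exact ⟨hx, by simpa [tangentForm, hα] using hL⟩
  · obtain ⟨t, ht⟩ := FiniteField.isSquare_of_char_two (ringChar.eq F 2) (α / β)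
    obtain rfl : α = t * t * β := by rw [← ht, div_mul_cancel₀ _ hβ]
    have hy : y = -(t * x) := by
      have h : β * (t * x + y) ^ 2 = 0 := by
        linear_combination hM + β * t * x * y * CharTwo.two_eq_zero (R := F)
      simpa [hβ, add_eq_zero_iff_eq_neg'] using h
    subst hy
    have h : β * x * (t ^ 3 + b * t + c) = 0 := by
      unfold tangentForm at hL
      linear_combination -hL + β * c * x * CharTwo.two_eq_zero (R := F)
    have hx : x = 0 := by simpa [hβ, hroot t] using h
    simp [hx]

theorem pencilParam_ne_zero [Fintype F] (hroot : ∀ t : F, t ^ 3 + b * t + c ≠ 0)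
    (hαβ : (α, β) ≠ (0, 0)) {s : Fin 2 → F} (hs : s ≠ 0) : pencilParam b c α β s ≠ 0 := by
  intro h
  have h0 := congrFun h 0
  have h1 := congrFun h 1
  have h2 := congrFun h 2
  simp only [pencilParam, Matrix.cons_val, Pi.zero_apply, mul_eq_zero, neg_eq_zero] at h0 h1 h2
  have hL : tangentForm b c α β (s 0) (s 1) = 0 := by
    by_contra hL
    exact hs (by ext i; fin_cases i <;> simp_all)
  obtain ⟨hs0, hs1⟩ := eq_zero_of_tangentForm_eq_zero hroot hαβ h2 hL
  exact hs (by ext i; fin_cases i <;> simp [hs0, hs1])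

theorem ncard_pencilConic [Fintype F] (hroot : ∀ t : F, t ^ 3 + b * t + c ≠ 0)
    (hαβ : (α, β) ≠ (0, 0)) :
    (pencilConic b c α β).ncard = Fintype.card F + 1 := by
  have h := fun s => pencilParam_ne_zero (b := b) (c := c) hroot hαβ (s := s)
  rw [← range_pencilParamProj hroot hαβ h,
    Set.ncard_range_of_injective (pencilParamProj_injective hroot hαβ h),
    card_of_finrank_two F (Fin 2 → F) (Module.finrank_fin_fun F), Nat.card_eq_fintype_card]

/-- The conic meets the line at infinity in a single point. -/
theorem det_eq_zero_of_pencil_at_infinity (hαβ : (α, β) ≠ (0, 0)) {u w : Fin 3 → F}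
    (hu : α * u 0 ^ 2 + β * u 1 ^ 2 = 0) (hw : α * w 0 ^ 2 + β * w 1 ^ 2 = 0) :
    u 0 * w 1 - u 1 * w 0 = 0 := by
  have hα : α * (u 0 * w 1 - u 1 * w 0) ^ 2 = 0 := by
    linear_combination w 1 ^ 2 * hu + u 1 ^ 2 * hw
      - (α * u 0 * u 1 * w 0 * w 1 + β * u 1 ^ 2 * w 1 ^ 2) * CharTwo.two_eq_zero (R := F)
  have hβ : β * (u 0 * w 1 - u 1 * w 0) ^ 2 = 0 := by
    linear_combination w 0 ^ 2 * hu + u 0 ^ 2 * hw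
      - (β * u 0 * u 1 * w 0 * w 1 + α * u 0 ^ 2 * w 0 ^ 2) * CharTwo.two_eq_zero (R := F)
  by_contra hk
  exact hαβ (by simp_all)

theorem crossProduct_eq_zero_of_pencilPolar_eq_zero [Fintype F]
    (hroot : ∀ t : F, t ^ 3 + b * t + c ≠ 0) (hαβ : (α, β) ≠ (0, 0)) {u w : Fin 3 → F}
    (hu : pencilForm b c α β u = 0) (hw : pencilForm b c α β w = 0)
    (h : pencilPolar b c α β u w = 0) : crossProduct u w = 0 := by
  rw [pencilForm_eq_add_mul_tangentForm] at hu hw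
  unfold pencilPolar at h
  obtain ⟨hx, hy⟩ := eq_zero_of_tangentForm_eq_zero hroot hαβ
    (x := w 2 * u 0 - u 2 * w 0) (y := w 2 * u 1 - u 2 * w 1)
    (by linear_combination w 2 ^ 2 * hu + u 2 ^ 2 * hw - u 2 * w 2 * h
      - u 2 * w 2 * (α * u 0 * w 0 + β * u 1 * w 1) * CharTwo.two_eq_zero (R := F))
    (by unfold tangentForm at h ⊢
        linear_combination
          h - u 2 * (β * c * w 0 + (α + β * b) * w 1) * CharTwo.two_eq_zero (R := F))
  have hk : u 0 * w 1 - u 1 * w 0 = 0 := by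
    by_cases hz : u 2 = 0 ∧ w 2 = 0
    · exact det_eq_zero_of_pencil_at_infinity hαβ (by simpa [hz.1] using hu)
        (by simpa [hz.2] using hw)
    · have hu2 : u 2 * (u 0 * w 1 - u 1 * w 0) = 0 := by linear_combination u 1 * hx - u 0 * hy
      have hw2 : w 2 * (u 0 * w 1 - u 1 * w 0) = 0 := by linear_combination w 1 * hx - w 0 * hy
      rw [not_and_or] at hz
      rcases hz with hz | hz <;> simp_all
  ext i; fin_cases i <;> simp [cross_apply] <;>
    [linear_combination hy; linear_combination -hx; exact hk]

theorem pencilConic_not_collinear [Fintype F] (hroot : ∀ t : F, t ^ 3 + b * t + c ≠ 0)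
    (hαβ : (α, β) ≠ (0, 0)) {p₁ p₂ p₃ : ℙ F (Fin 3 → F)} (h₁ : p₁ ∈ pencilConic b c α β)
    (h₂ : p₂ ∈ pencilConic b c α β) (h₃ : p₃ ∈ pencilConic b c α β) (h₁₂ : p₁ ≠ p₂)
    (h₁₃ : p₁ ≠ p₃) (h₂₃ : p₂ ≠ p₃) :
    ¬ ∃ W : Submodule F (Fin 3 → F), Module.finrank F W = 2 ∧
      p₁.submodule ≤ W ∧ p₂.submodule ≤ W ∧ p₃.submodule ≤ W := by
  rintro ⟨W, hW, h₁W, h₂W, h₃W⟩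
  obtain ⟨a, e, ha, he, hae⟩ := exists_smul_add_smul_eq_rep h₁₂ h₁₃ h₂₃ hW h₁W h₂W h₃W
  have hpolar : pencilPolar b c α β p₁.rep p₂.rep = 0 := by
    have h : pencilForm b c α β p₃.rep = 0 := h₃
    rw [← hae, pencilForm_smul_add_smul, show pencilForm b c α β p₁.rep = 0 from h₁,
      show pencilForm b c α β p₂.rep = 0 from h₂] at h
    simpa [ha, he] using h
  apply h₁₂
  rw [← mk_rep p₁, ← mk_rep p₂, mk_eq_mk_iff_crossProduct_eq_zero]
  exact crossProduct_eq_zero_of_pencilPolar_eq_zero hroot hαβ h₁ h₂ hpolar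

theorem eq_zero_of_pencilForm_one_zero_of_pencilForm_zero_one
    (hroot : ∀ t : F, t ^ 3 + b * t + c ≠ 0) {v : Fin 3 → F} (hφ : pencilForm b c 1 0 v = 0)
    (hχ : pencilForm b c 0 1 v = 0) : v 0 = 0 ∧ v 1 = 0 := by
  simp only [pencilForm, one_mul, zero_mul, add_zero, zero_add] at hφ hχ
  rcases eq_or_ne (v 2) 0 with hz | hz
  · simp_all
  have hx : v 0 = 0 := by
    have h : v 0 * (v 0 ^ 3 + b * v 0 * v 2 ^ 2 + c * v 2 ^ 3) = 0 := by
      linear_combination v 2 ^ 2 * hχ + (v 0 ^ 2 - v 1 * v 2 + b * v 2 ^ 2) * hφ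
        - b * v 1 * v 2 ^ 3 * CharTwo.two_eq_zero (R := F)
    refine (mul_eq_zero.mp h).resolve_right fun hcub => hroot (v 0 / v 2) ?_
    field_simp
    linear_combination hcub
  exact ⟨hx, by simpa [hx, hz] using hφ⟩

theorem pencilConic_inter_pencilConic (hroot : ∀ t : F, t ^ 3 + b * t + c ≠ 0) {α' β' : F}
    (hdet : α * β' ≠ α' * β) :
    pencilConic b c α β ∩ pencilConic b c α' β' = {affinePoint 0 0} := by
  ext p
  induction p using Projectivization.ind with | h v hv =>
  rw [Set.mem_inter_iff, mk_mem_pencilConic, mk_mem_pencilConic, Set.mem_singleton_iff,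
    affinePoint, mk_eq_mk_iff_crossProduct_eq_zero]
  constructor
  · rintro ⟨h, h'⟩
    rw [pencilForm_eq_mul_add_mul] at h h'
    have hd : α * β' - α' * β ≠ 0 := sub_ne_zero.mpr hdet
    have hφ : (α * β' - α' * β) * pencilForm b c 1 0 v = 0 := by linear_combination β' * h - β * h'
    have hχ : (α * β' - α' * β) * pencilForm b c 0 1 v = 0 := by linear_combination α * h' - α' * h
    obtain ⟨h0, h1⟩ := eq_zero_of_pencilForm_one_zero_of_pencilForm_zero_one hroot
      ((mul_eq_zero.mp hφ).resolve_left hd) ((mul_eq_zero.mp hχ).resolve_left hd)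
    ext i; fin_cases i <;> simp [cross_apply, h0, h1]
  · intro h
    have h0 := congrFun h 0
    have h1 := congrFun h 1
    simp [cross_apply] at h0 h1
    simp [pencilForm, h0, h1]

end CharTwo

theorem pencil_of_trivially_intersecting_conic_ovals_general
    (n : ℕ) (F : Type*) [Field F] [Fintype F]
    (hF : Fintype.card F = 2 ^ n) (b c : F)
    (hirr : Irreducible (X ^ 3 + C b * X + C c : F[X]))
    (φ χ : (Fin 3 → F) → F)
    (hφ : φ = fun v => v 0 ^ 2 + v 1 * v 2)
    (hχ : χ = fun v => v 1 ^ 2 + b * v 1 * v 2 + c * v 0 * v 2)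
    (Con : F → F → Set (Projectivization F (Fin 3 → F)))
    (hCon : ∀ α β : F, Con α β = {p | α * φ p.rep + β * χ p.rep = 0}) :
    (∀ α β : F, (α, β) ≠ (0, 0) →
      (Con α β).ncard = Fintype.card F + 1 ∧
      (∀ p₁ ∈ Con α β, ∀ p₂ ∈ Con α β, ∀ p₃ ∈ Con α β,
        p₁ ≠ p₂ → p₁ ≠ p₃ → p₂ ≠ p₃ →
        ¬ ∃ W : Submodule F (Fin 3 → F), Module.finrank F W = 2 ∧
          p₁.submodule ≤ W ∧ p₂.submodule ≤ W ∧ p₃.submodule ≤ W)) ∧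
    (∀ α β α' β' : F, (α, β) ≠ (0, 0) → (α', β') ≠ (0, 0) → α * β' ≠ α' * β →
      Con α β ∩ Con α' β' = {affinePoint (0 : F) 0}) := by
  have : CharP F 2 := charP_two_of_card_eq_two_pow hF
  have hroot := cubic_ne_zero_of_irreducible hirr
  obtain rfl : Con = pencilConic b c := by
    funext α β
    rw [hCon, hφ, hχ]
    rfl
  refine ⟨fun α β hαβ => ⟨ncard_pencilConic hroot hαβ, ?_⟩,
    fun α β α' β' _ _ hdet => pencilConic_inter_pencilConic hroot hdet⟩
  intro p₁ h₁ p₂ h₂ p₃ h₃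
  exact pencilConic_not_collinear hroot hαβ h₁ h₂ h₃

/-- Let `F` have `2ⁿ` elements and let `X³ + bX + c` be irreducible over `F`.
With `φ(x,y,z) = x² + yz` and `χ(x,y,z) = y² + byz + cxz`, every member
`C_{α,β} = {(x:y:z) : αφ + βχ = 0}` (for `(α,β) ≠ (0,0)`) of the pencil generated by `φ` and
`χ` is an oval of `PG(2,q)` (it has `q+1` points, no three collinear), and projectively
distinct members of the pencil meet exactly in the single point `(0:0:1)`. -/
theorem pencil_of_trivially_intersecting_conic_ovals
    (n : ℕ) (hn : 1 ≤ n) (F : Type*) [Field F] [Fintype F]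
    (hF : Fintype.card F = 2 ^ n) (b c : F)
    (hirr : Irreducible (X ^ 3 + C b * X + C c : F[X]))
    (φ χ : (Fin 3 → F) → F)
    (hφ : φ = fun v => v 0 ^ 2 + v 1 * v 2)
    (hχ : χ = fun v => v 1 ^ 2 + b * v 1 * v 2 + c * v 0 * v 2)
    (Con : F → F → Set (Projectivization F (Fin 3 → F)))
    (hCon : ∀ α β : F, Con α β = {p | α * φ p.rep + β * χ p.rep = 0}) :
    (∀ α β : F, (α, β) ≠ (0, 0) →
      (Con α β).ncard = Fintype.card F + 1 ∧
      (∀ p₁ ∈ Con α β, ∀ p₂ ∈ Con α β, ∀ p₃ ∈ Con α β,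
        p₁ ≠ p₂ → p₁ ≠ p₃ → p₂ ≠ p₃ →
        ¬ ∃ W : Submodule F (Fin 3 → F), Module.finrank F W = 2 ∧
          p₁.submodule ≤ W ∧ p₂.submodule ≤ W ∧ p₃.submodule ≤ W)) ∧
    (∀ α β α' β' : F, (α, β) ≠ (0, 0) → (α', β') ≠ (0, 0) → α * β' ≠ α' * β →
      Con α β ∩ Con α' β' = {affinePoint (0 : F) 0}) :=
  pencil_of_trivially_intersecting_conic_ovals_general n F hF b c hirr φ χ hφ hχ Con hCon
end

section
/- Let n, k ≥ 1 with gcd(k, n) = 1, let F be the finite field with 2ⁿ elements, and let a, b ∈ F with (a, b) ≠ (0, 0). Then the set {x ∈ F : a·x^(2^k) + b·x = 0} has at most two elements. -/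
/-! A nonzero root `x` of `a X^(2^k) + b X` with `a ≠ 0` satisfies `x^(2^k - 1) = -b/a`, so the
quotient of two nonzero roots is a `(2^k - 1)`-th root of unity. In `F` every nonzero element is a
`(2^n - 1)`-th root of unity, and `gcd (2^k - 1) (2^n - 1) = 2^(gcd k n) - 1 = 1`, so the quotient
is `1`: there is at most one nonzero root. -/

theorem pow_sub_one_eq_one_of_pow_pow_sub_one_eq_one {M : Type*} [Monoid M] {x : M} {p k n : ℕ}
    (hkn : k.gcd n = 1) (hk : x ^ (p ^ k - 1) = 1) (hn : x ^ (p ^ n - 1) = 1) :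
    x ^ (p - 1) = 1 := by
  simpa [hkn] using pow_gcd_eq_one.mpr ⟨hk, hn⟩

theorem FiniteField.eq_one_of_pow_two_pow_sub_one_eq_one {F : Type*} [Field F] [Fintype F]
    {n k : ℕ} (hF : Fintype.card F = 2 ^ n) (hkn : k.gcd n = 1) {x : F} (hx : x ≠ 0)
    (h : x ^ (2 ^ k - 1) = 1) : x = 1 := by
  simpa using pow_sub_one_eq_one_of_pow_pow_sub_one_eq_one hkn h
    (hF ▸ FiniteField.pow_card_sub_one_eq_one x hx)

theorem mul_pow_sub_one_eq_neg_of_mul_pow_add_mul_eq_zero {F : Type*} [Field F] {a b x : F}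
    {m : ℕ} (hm : 0 < m) (hx : x ≠ 0) (h : a * x ^ m + b * x = 0) :
    a * x ^ (m - 1) = -b := by
  have hfactor : x * (a * x ^ (m - 1) + b) = 0 := by
    rw [← h, ← Nat.sub_add_cancel hm, pow_succ]
    simp only [Nat.add_sub_cancel]
    ring
  linear_combination (mul_eq_zero.mp hfactor).resolve_left hx

theorem FiniteField.eq_of_mul_pow_two_pow_add_mul_eq_zero {F : Type*} [Field F] [Fintype F]
    {n k : ℕ} (hF : Fintype.card F = 2 ^ n) (hkn : k.gcd n = 1) {a b : F}
    (hab : (a, b) ≠ (0, 0)) {x y : F} (hx : x ≠ 0) (hy : y ≠ 0)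
    (hxr : a * x ^ 2 ^ k + b * x = 0) (hyr : a * y ^ 2 ^ k + b * y = 0) : x = y := by
  by_cases ha : a = 0
  · have hb : b ≠ 0 := fun hb => hab (by simp [ha, hb])
    simp [ha, hb, hx] at hxr
  have hpow : x ^ (2 ^ k - 1) = y ^ (2 ^ k - 1) := mul_left_cancel₀ ha <| by
    rw [mul_pow_sub_one_eq_neg_of_mul_pow_add_mul_eq_zero (Nat.two_pow_pos k) hx hxr,
      mul_pow_sub_one_eq_neg_of_mul_pow_add_mul_eq_zero (Nat.two_pow_pos k) hy hyr]
  have hquot : (x / y) ^ (2 ^ k - 1) = 1 := by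
    rw [div_pow, hpow, div_self (pow_ne_zero _ hy)]
  exact (div_eq_one_iff_eq hy).mp
    (eq_one_of_pow_two_pow_sub_one_eq_one hF hkn (div_ne_zero hx hy) hquot)

theorem roots_of_a_frobenius_plus_b_le_two_general
    (n k : ℕ) (hgcd : Nat.gcd k n = 1)
    (F : Type*) [Field F] [Fintype F] (hF : Fintype.card F = 2 ^ n)
    (a b : F) (hab : (a, b) ≠ (0, 0)) :
    {x : F | a * x ^ 2 ^ k + b * x = 0}.encard ≤ 2 := by
  set S := {x : F | a * x ^ 2 ^ k + b * x = 0}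
  have hnonzero : (S \ {0}).encard ≤ 1 := Set.encard_le_one_iff.mpr fun x y hx hy =>
    FiniteField.eq_of_mul_pow_two_pow_add_mul_eq_zero hF hgcd hab hx.2 hy.2 hx.1 hy.1
  calc S.encard ≤ (insert 0 (S \ {0})).encard := by
        rw [Set.insert_sdiff_singleton]
        exact Set.encard_le_encard (Set.subset_insert _ _)
    _ ≤ (S \ {0}).encard + 1 := Set.encard_insert_le _ _
    _ ≤ 1 + 1 := by gcongr
    _ = 2 := one_add_one_eq_two

/-- If `gcd(k, n) = 1` (with `n, k ≥ 1`), `F` is the field with `2ⁿ` elements,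
and `(a, b) ≠ (0, 0)`, then `a·x^(2^k) + b·x = 0` has at most two roots in `F`. -/
theorem roots_of_a_frobenius_plus_b_le_two
    (n k : ℕ) (hn : 1 ≤ n) (hk : 1 ≤ k) (hgcd : Nat.gcd k n = 1)
    (F : Type*) [Field F] [Fintype F] (hF : Fintype.card F = 2 ^ n)
    (a b : F) (hab : (a, b) ≠ (0, 0)) :
    {x : F | a * x ^ 2 ^ k + b * x = 0}.encard ≤ 2 :=
  roots_of_a_frobenius_plus_b_le_two_general n k hgcd F hF a b hab
end

section
/- Let n, k ≥ 1 with gcd(3k, n) = 1 and let F be the finite field with 2ⁿ elements. Then the polynomial x^(2^k + 1) + x + 1 has no roots in F; that is, for every x ∈ F, x^(2^k + 1) + x + 1 ≠ 0. -/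
/-!
In characteristic `2`, a root `x` of `X ^ (2 ^ k + 1) + X + 1` satisfies `φ x * x = x + 1`
for the field endomorphism `φ = (· ^ 2 ^ k)`, i.e. `φ x = 1 + 1 / x`. The Möbius map
`y ↦ 1 + 1 / y` has order `3` in characteristic `2` and commutes with `φ`, so
`x ^ 2 ^ (3 * k) = x`. Together with `x ^ 2 ^ n = x` and `gcd (3 * k) n = 1` this forces
`x ^ 2 = x`, so `x ∈ {0, 1}`, and neither is a root.
-/

theorem pow_pow_gcd_eq_self {M : Type*} [Monoid M] {x : M} {p a b : ℕ}
    (ha : x ^ p ^ a = x) (hb : x ^ p ^ b = x) : x ^ p ^ a.gcd b = x := by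
  have hperiodic (m : ℕ) : Function.IsPeriodicPt (· ^ p) m x ↔ x ^ p ^ m = x := by
    rw [Function.IsPeriodicPt, Function.IsFixedPt, pow_iterate]
  exact (hperiodic _).mp (((hperiodic a).mpr ha).gcd ((hperiodic b).mpr hb))

theorem iterate_three_eq_self_of_mul_eq_add_one {R : Type*} [CommRing R] [CharP R 2]
    (f : R →+* R) {x : R} (hx : f x * x = x + 1) : f^[3] x = x := by
  have hfx : f (f x) * f x = f x + 1 := by simpa using congrArg f hx
  have hffx : f (f (f x)) * f (f x) = f (f x) + 1 := by simpa using congrArg f hfx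
  have hprod : f (f x) * f x * x = 1 := by
    linear_combination x * hfx + hx + x * CharTwo.two_eq_zero (R := R)
  show f (f (f x)) = x
  linear_combination
    -f (f (f x)) * hprod + f x * x * hffx + hprod + hx + CharTwo.two_eq_zero (R := R)

theorem no_root_pow_two_pow_succ_add_self_add_one_general
    (n k : ℕ) (hgcd : Nat.gcd (3 * k) n = 1)
    (F : Type*) [Field F] [Fintype F] (hF : Fintype.card F = 2 ^ n) :
    ∀ x : F, x ^ (2 ^ k + 1) + x + 1 ≠ 0 := by
  intro x hx
  have : CharP F 2 := charP_of_card_eq_prime_pow hF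
  have hperiod_3k : x ^ 2 ^ (3 * k) = x := by
    rw [mul_comm, ← iterateFrobenius_def, iterateFrobenius_mul_apply]
    refine iterate_three_eq_self_of_mul_eq_add_one _ ?_
    rw [iterateFrobenius_def]
    linear_combination hx - (x + 1) * CharTwo.two_eq_zero (R := F)
  have hperiod_n : x ^ 2 ^ n = x := hF ▸ FiniteField.pow_card x
  have hidem : x * x = x := by
    simpa [hgcd, sq] using pow_pow_gcd_eq_self hperiod_3k hperiod_n
  rcases IsIdempotentElem.iff_eq_zero_or_one.mp hidem with rfl | rfl
  · simp at hx
  · exact one_ne_zero (by linear_combination hx - CharTwo.two_eq_zero (R := F) : (1 : F) = 0)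

/-- If `gcd(3k, n) = 1` (with `n, k ≥ 1`) and `F` is the field with `2ⁿ`
elements, then `x^(2^k + 1) + x + 1` has no roots in `F`. -/
theorem no_root_pow_two_pow_succ_add_self_add_one
    (n k : ℕ) (hn : 1 ≤ n) (hk : 1 ≤ k) (hgcd : Nat.gcd (3 * k) n = 1)
    (F : Type*) [Field F] [Fintype F] (hF : Fintype.card F = 2 ^ n) :
    ∀ x : F, x ^ (2 ^ k + 1) + x + 1 ≠ 0 :=
  no_root_pow_two_pow_succ_add_self_add_one_general n k hgcd F hF
end

section
/- Let n, k ≥ 1 with gcd(3k, n) = 1 and let F be the finite field with 2ⁿ elements. Then the polynomial x^(2^(2k) − 1) + x^(2^k − 1) + 1 has no roots in F; that is, for every x ∈ F, x^(2^(2k) − 1) + x^(2^k − 1) + 1 ≠ 0. -/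
/-!
Multiplying by `x`, a root is a zero of `x ^ q ^ 2 + x ^ q + x` with `q = 2 ^ k`. In characteristic
two, `φ = Frob ^ k` is additive, so `φ² x = φ x + x` gives `φ³ x = φ x + x + φ x = x`. Hence `x` is
a periodic point of the Frobenius of periods `3k` and `n`, so of period `gcd (3k, n) = 1`: `x` lies
in the prime field `{0, 1}`, and neither `0` nor `1` is a root.
-/

open Function

theorem pow_two_pow_three_mul_eq_self {R : Type*} [CommRing R] [CharP R 2] {x : R} {k : ℕ}
    (h : x ^ 2 ^ (2 * k) + x ^ 2 ^ k + x = 0) : x ^ 2 ^ (3 * k) = x := by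
  set φ := iterateFrobenius R 2 k
  have hφ (y : R) : φ y = y ^ 2 ^ k := rfl
  have hφφ : φ (φ x) = φ x + x := by
    rw [hφ, hφ, ← pow_mul, ← pow_add, ← two_mul]
    linear_combination h - CharTwo.add_self_eq_zero (x ^ 2 ^ k + x)
  calc x ^ 2 ^ (3 * k) = φ (φ (φ x)) := by
        rw [hφ, hφ, hφ, ← pow_mul, ← pow_mul, ← pow_add, ← pow_add]; ring_nf
    _ = x := by
        rw [hφφ, map_add, hφφ]
        linear_combination CharTwo.add_self_eq_zero (φ x)

theorem FiniteField.pow_char_eq_self_of_coprime {F : Type*} [Field F] [Fintype F] {p n m : ℕ}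
    [Fact p.Prime] [CharP F p] (hF : Fintype.card F = p ^ n) (hmn : m.Coprime n) {x : F}
    (hx : x ^ p ^ m = x) : x ^ p = x := by
  have hperiodic (r : ℕ) (hr : x ^ p ^ r = x) : IsPeriodicPt (frobenius F p) r x := by
    rwa [IsPeriodicPt, IsFixedPt, iterate_frobenius]
  have h := (hperiodic m hx).gcd (hperiodic n (hF ▸ FiniteField.pow_card x))
  rwa [hmn.gcd_eq_one, IsPeriodicPt, IsFixedPt, iterate_one, frobenius_def] at h

theorem no_root_pow_sub_one_sum_general
    (n k : ℕ) (hk : 1 ≤ k) (hgcd : Nat.gcd (3 * k) n = 1)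
    (F : Type*) [Field F] [Fintype F] (hF : Fintype.card F = 2 ^ n) :
    ∀ x : F, x ^ (2 ^ (2 * k) - 1) + x ^ (2 ^ k - 1) + 1 ≠ 0 := by
  intro x hroot
  have : CharP F 2 := charP_of_card_eq_prime_pow hF
  have hcubic : x ^ 2 ^ (2 * k) + x ^ 2 ^ k + x = 0 := by
    rw [← mul_pow_sub_one (pow_ne_zero (2 * k) two_ne_zero) x,
      ← mul_pow_sub_one (pow_ne_zero k two_ne_zero) x]
    linear_combination x * hroot
  have hx : x ^ 2 = x :=
    FiniteField.pow_char_eq_self_of_coprime hF hgcd (pow_two_pow_three_mul_eq_self hcubic)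
  have hidem : IsIdempotentElem x := (sq x).symm.trans hx
  rcases IsIdempotentElem.iff_eq_zero_or_one.mp hidem with rfl | rfl
  · have hexp (j : ℕ) (hj : j ≠ 0) : 2 ^ j - 1 ≠ 0 :=
      Nat.sub_ne_zero_of_lt (Nat.one_lt_two_pow hj)
    simp [zero_pow (hexp k (by omega)), zero_pow (hexp (2 * k) (by omega))] at hroot
  · rw [one_pow, one_pow, CharTwo.add_self_eq_zero, zero_add] at hroot
    exact one_ne_zero hroot

/-- If `gcd(3k, n) = 1` (with `n, k ≥ 1`) and `F` is the field with `2ⁿ`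
elements, then `x^(2^(2k) − 1) + x^(2^k − 1) + 1` has no roots in `F`. -/
theorem no_root_pow_sub_one_sum
    (n k : ℕ) (hn : 1 ≤ n) (hk : 1 ≤ k) (hgcd : Nat.gcd (3 * k) n = 1)
    (F : Type*) [Field F] [Fintype F] (hF : Fintype.card F = 2 ^ n) :
    ∀ x : F, x ^ (2 ^ (2 * k) - 1) + x ^ (2 ^ k - 1) + 1 ≠ 0 :=
  no_root_pow_sub_one_sum_general n k hk hgcd F hF
end

section
/- Let n, k ≥ 1 with gcd(3k, n) = 1, let F be the finite field with 2ⁿ elements, and define φ_k : F² → F² by φ_k(x, y) = (x^(2^k) + y, y^(2^k) + x + y). Then φ_k is affine ovalinear: it is an F₂-linear (i.e., additive) bijection of F², and for every two affine lines ℓ and m of F², the set φ_k(ℓ) ∩ m has at most two elements (so φ_k maps every affine line to an oval of the standard affine plane). -/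
/-!
Write `σ x = x ^ 2 ^ k`. Since `gcd(k, n) = gcd(3k, n) = 1`, both `σ` and `σ³` fix only `0` and `1`.
If `φ(x, y) = 0` then `y = σ x` and `σ² x + σ x + x = 0`; applying `σ` and subtracting gives
`σ³ x = x`, so `x = 0`. A point `φ(p + t v)` lies on the line `r + F c` exactly when
`α σ(t) + β t = γ`. For `α ≠ 0` two differences `d, e ≠ 0` of solutions satisfy `σ(d/e) = d/e`,
so there are at most two solutions. The degenerate case `α = β = 0` forces `σ u * u = u + 1`
for `u = v₂ / v₁`, i.e. `σ` acts on `u` as the Möbius map `x ↦ 1 + 1/x`, which has order 3 in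
characteristic 2; hence `σ³ u = u`, impossible for `u ∈ {0, 1}`.
-/

/-- An affine line of `F²`: a set `{p + t • v : t ∈ F}` with `v ≠ 0`.  These are the lines of
the Desarguesian affine plane `AG(2,|F|)`. -/
def IsAffineLine {F : Type*} [Field F] (ℓ : Set (F × F)) : Prop :=
  ∃ p v : F × F, v ≠ 0 ∧ ℓ = {w | ∃ t : F, w = p + t • v}

open Function

section

variable {F : Type*}

theorem eq_zero_or_eq_one_of_iterateFrobenius_eq_self [Field F] [Fintype F] [CharP F 2]
    {n a : ℕ} (hF : Fintype.card F = 2 ^ n) (ha : a.Coprime n) {x : F}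
    (hx : iterateFrobenius F 2 a x = x) : x = 0 ∨ x = 1 := by
  have hper_a : IsPeriodicPt (frobenius F 2) a x := by
    rwa [IsPeriodicPt, IsFixedPt, ← coe_iterateFrobenius]
  have hper_n : IsPeriodicPt (frobenius F 2) n x := by
    rw [IsPeriodicPt, IsFixedPt, ← coe_iterateFrobenius, iterateFrobenius_def, ← hF,
      FiniteField.pow_card]
  have hfix : IsPeriodicPt (frobenius F 2) 1 x := ha ▸ hper_a.gcd hper_n
  refine IsIdempotentElem.iff_eq_zero_or_one.mp ?_
  simpa [IsIdempotentElem, IsPeriodicPt, IsFixedPt, frobenius_def, sq] using hfix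

section CharTwo

variable [CommRing F] [CharP F 2] (σ : F →+* F)

/-- The equation says `σ x = 1 + x⁻¹`, and in characteristic 2 the Möbius map `x ↦ 1 + x⁻¹`
has order 3. -/
theorem iterate_three_eq_self_of_map_mul_self_eq_add_one {x : F} (hx : σ x * x = x + 1) :
    σ^[3] x = x := by
  have h2 : (2 : F) = 0 := CharP.cast_eq_zero F 2
  have hσ2 : ∀ y : F, σ y * y = y + 1 → σ (σ y) * (y + 1) = 1 := fun y hy => by
    have hσy : σ (σ y) * σ y = σ y + 1 := by simpa using congrArg σ hy
    linear_combination y * hσy - (σ (σ y) - 1) * hy + y * h2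
  have hσx : σ (σ x) * σ x = σ x + 1 := by simpa using congrArg σ hx
  have h3 : σ (σ (σ x)) * (σ x + 1) = 1 := hσ2 (σ x) hσx
  have hinv : x * (σ x + 1) = 1 := by linear_combination hx + x * h2
  show σ (σ (σ x)) = x
  linear_combination x * h3 - σ (σ (σ x)) * hinv

end CharTwo

section Field

variable [Field F] (σ : F →+* F)

theorem encard_setOf_mul_map_add_mul_eq_le_two (hσ : ∀ x, σ x = x → x = 0 ∨ x = 1) {α β : F}
    (hαβ : α ≠ 0 ∨ β ≠ 0) (γ : F) : {t | α * σ t + β * t = γ}.encard ≤ 2 := by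
  by_contra! h
  obtain ⟨s, hsT, hs⟩ := Set.exists_subset_encard_eq (Order.add_one_le_of_lt h)
  obtain ⟨x, y, z, hxy, hxz, hyz, rfl⟩ := Set.encard_eq_three.mp hs
  have hx : α * σ x + β * x = γ := hsT (by simp)
  have hy : α * σ y + β * y = γ := hsT (by simp)
  have hz : α * σ z + β * z = γ := hsT (by simp)
  have hd : α * σ (x - y) + β * (x - y) = 0 := by rw [map_sub]; linear_combination hx - hy
  have he : α * σ (x - z) + β * (x - z) = 0 := by rw [map_sub]; linear_combination hx - hz
  have hd0 : x - y ≠ 0 := sub_ne_zero.mpr hxy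
  have he0 : x - z ≠ 0 := sub_ne_zero.mpr hxz
  have hα : α ≠ 0 := by
    rintro rfl
    have hβ : β ≠ 0 := hαβ.resolve_left (not_not.mpr rfl)
    simp [hβ, hd0] at hd
  have hfix : σ ((x - y) / (x - z)) = (x - y) / (x - z) := by
    rw [map_div₀, div_eq_div_iff ((map_ne_zero σ).mpr he0) he0]
    exact mul_left_cancel₀ hα (by linear_combination (x - z) * hd - (x - y) * he)
  rcases hσ _ hfix with h | h
  · exact hd0 ((div_eq_zero_iff.mp h).resolve_right he0)
  · exact hyz (sub_right_injective ((div_eq_one_iff_eq he0).mp h))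

/-- `φ_k`, with `x ↦ x ^ 2 ^ k` generalized to an arbitrary ring endomorphism `σ`. -/
@[simps apply]
def phiMap : F × F →+ F × F where
  toFun w := (σ w.1 + w.2, σ w.2 + w.1 + w.2)
  map_zero' := by simp
  map_add' u v := by ext <;> simp only [Prod.fst_add, Prod.snd_add, map_add] <;> ring

variable {σ}

/-- A point of `φ(p + F v)` on `r + F c` has vanishing cross product with `c` after subtracting
`r`; by additivity of `φ` this is an equation `α σ(t) + β t = γ` in the parameter `t`. -/
theorem image_phiMap_inter_subset (p v r c : F × F) :
    phiMap σ '' {w | ∃ t : F, w = p + t • v} ∩ {w | ∃ s : F, w = r + s • c} ⊆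
      (fun t => phiMap σ (p + t • v)) ''
        {t | (c.2 * σ v.1 - c.1 * σ v.2) * σ t + (c.2 * v.2 - c.1 * (v.1 + v.2)) * t =
          c.2 * (r.1 - (phiMap σ p).1) - c.1 * (r.2 - (phiMap σ p).2)} := by
  rintro _ ⟨⟨_, ⟨t, rfl⟩, rfl⟩, s, hs⟩
  refine ⟨t, ?_, rfl⟩
  simp only [map_add, Prod.ext_iff, Prod.fst_add, Prod.snd_add, phiMap_apply, Prod.smul_fst,
    Prod.smul_snd, smul_eq_mul, map_mul, Set.mem_ofPred_eq] at hs ⊢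
  linear_combination c.2 * hs.1 - c.1 * hs.2

variable [CharP F 2]

theorem phiMap_injective (hσ3 : ∀ x, σ^[3] x = x → x = 0 ∨ x = 1) : Injective (phiMap σ) := by
  have h2 : (2 : F) = 0 := CharP.cast_eq_zero F 2
  refine (injective_iff_map_eq_zero _).mpr fun ⟨x, y⟩ hw => ?_
  simp only [phiMap_apply, Prod.mk_eq_zero] at hw ⊢
  obtain ⟨hx, hy⟩ := hw
  have hy' : y = σ x := by linear_combination hx - σ x * h2
  subst hy'
  have hσσ : σ (σ (σ x)) + σ x + σ (σ x) = 0 := by simpa using congrArg σ hy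
  have hx3 : σ^[3] x = x := by
    show σ (σ (σ x)) = x
    linear_combination hσσ - hy
  rcases hσ3 x hx3 with rfl | rfl
  · simp
  · rw [map_one, map_one] at hy
    exact absurd (by linear_combination hy - h2 : (1 : F) = 0) one_ne_zero

theorem map_mul_self_ne_add_one (hσ3 : ∀ x, σ^[3] x = x → x = 0 ∨ x = 1) (u : F) :
    σ u * u ≠ u + 1 := by
  intro hu
  rcases hσ3 u (iterate_three_eq_self_of_map_mul_self_eq_add_one σ hu) with rfl | rfl
  · simp at hu
  · rw [map_one] at hu
    exact one_ne_zero (by linear_combination -hu : (1 : F) = 0)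

theorem eq_zero_of_map_mul_self_eq (hσ3 : ∀ x, σ^[3] x = x → x = 0 ∨ x = 1) {a b : F}
    (h : σ b * b = σ a * (a + b)) : a = 0 ∧ b = 0 := by
  by_cases ha : a = 0
  · subst ha
    simpa using h
  · refine absurd ?_ (map_mul_self_ne_add_one hσ3 (b / a))
    have hσa : σ a ≠ 0 := (map_ne_zero σ).mpr ha
    rw [map_div₀]
    field_simp
    linear_combination h

theorem image_line_coeff_ne_zero (hσ3 : ∀ x, σ^[3] x = x → x = 0 ∨ x = 1) {v c : F × F}
    (hv : v ≠ 0) (hc : c ≠ 0) :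
    c.2 * σ v.1 - c.1 * σ v.2 ≠ 0 ∨ c.2 * v.2 - c.1 * (v.1 + v.2) ≠ 0 := by
  by_contra! h
  obtain ⟨hα, hβ⟩ := h
  have hdet : σ v.2 * v.2 = σ v.1 * (v.1 + v.2) := by
    by_cases hc1 : c.1 = 0
    · have hc2 : c.2 ≠ 0 := fun hc2 => hc (Prod.ext hc1 hc2)
      refine mul_left_cancel₀ hc2 ?_
      linear_combination σ v.2 * hβ - (v.1 + v.2) * hα
    · refine mul_left_cancel₀ hc1 ?_
      linear_combination σ v.1 * hβ - v.2 * hα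
  obtain ⟨h1, h2⟩ := eq_zero_of_map_mul_self_eq hσ3 hdet
  exact hv (Prod.ext h1 h2)

theorem encard_image_phiMap_inter_le_two (hσ1 : ∀ x, σ x = x → x = 0 ∨ x = 1)
    (hσ3 : ∀ x, σ^[3] x = x → x = 0 ∨ x = 1) {ℓ m : Set (F × F)} (hℓ : IsAffineLine ℓ)
    (hm : IsAffineLine m) : (phiMap σ '' ℓ ∩ m).encard ≤ 2 := by
  obtain ⟨p, v, hv, rfl⟩ := hℓ
  obtain ⟨r, c, hc, rfl⟩ := hm
  calc _ ≤ _ := Set.encard_mono (image_phiMap_inter_subset p v r c)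
    _ ≤ _ := Set.encard_image_le _ _
    _ ≤ 2 := encard_setOf_mul_map_add_mul_eq_le_two σ hσ1 (image_line_coeff_ne_zero hσ3 hv hc) _

end Field

end

theorem phi_k_affine_ovalinear_general
    (n k : ℕ) (hgcd : Nat.gcd (3 * k) n = 1)
    (F : Type*) [Field F] [Fintype F] (hF : Fintype.card F = 2 ^ n)
    (φ : F × F → F × F)
    (hφ : φ = fun w => (w.1 ^ 2 ^ k + w.2, w.2 ^ 2 ^ k + w.1 + w.2)) :
    (∀ u v : F × F, φ (u + v) = φ u + φ v) ∧
    Function.Bijective φ ∧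
    ∀ ℓ m : Set (F × F), IsAffineLine ℓ → IsAffineLine m →
      (φ '' ℓ ∩ m).encard ≤ 2 := by
  have : CharP F 2 := charP_of_card_eq_prime_pow hF
  set σ := iterateFrobenius F 2 k
  have hσ1 : ∀ x, σ x = x → x = 0 ∨ x = 1 := fun _ =>
    eq_zero_or_eq_one_of_iterateFrobenius_eq_self hF (Nat.Coprime.coprime_mul_left hgcd)
  have hσ3 : ∀ x, σ^[3] x = x → x = 0 ∨ x = 1 := fun x hx =>
    eq_zero_or_eq_one_of_iterateFrobenius_eq_self hF (mul_comm 3 k ▸ hgcd)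
      (by rwa [coe_iterateFrobenius_mul])
  obtain rfl : φ = phiMap σ := by
    subst hφ
    funext w
    simp [σ, iterateFrobenius_def]
  exact ⟨map_add _, (phiMap_injective hσ3).bijective_of_finite,
    fun _ _ => encard_image_phiMap_inter_le_two hσ1 hσ3⟩

/-- If `gcd(3k, n) = 1` (with `n, k ≥ 1`) and `F` is the field with `2ⁿ`
elements, then `φ_k(x, y) = (x^(2^k) + y, y^(2^k) + x + y)` is affine ovalinear: it is an
`F₂`-linear (additive) bijection of `F²`, and the image of every affine line under `φ_k`
meets every affine line in at most two points. -/
theorem phi_k_affine_ovalinear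
    (n k : ℕ) (hn : 1 ≤ n) (hk : 1 ≤ k) (hgcd : Nat.gcd (3 * k) n = 1)
    (F : Type*) [Field F] [Fintype F] (hF : Fintype.card F = 2 ^ n)
    (φ : F × F → F × F)
    (hφ : φ = fun w => (w.1 ^ 2 ^ k + w.2, w.2 ^ 2 ^ k + w.1 + w.2)) :
    (∀ u v : F × F, φ (u + v) = φ u + φ v) ∧
    Function.Bijective φ ∧
    ∀ ℓ m : Set (F × F), IsAffineLine ℓ → IsAffineLine m →
      (φ '' ℓ ∩ m).encard ≤ 2 :=
  phi_k_affine_ovalinear_general n k hgcd F hF φ hφ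
end
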